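/- arXiv:2109.13607 — 10 statements merged into one kernel-verified Lean document; each statement's English description precedes it below -/
import Mathlib

section
/- Let n, k be positive integers, A an n×n real matrix, R a k×n real matrix with R Rᵀ = I_k, P := Rᵀ R, and assume P A = A. Set A_s := R A Rᵀ. If γ > 0 and the matrix γ I_k − A_s is invertible, then γ I_n − A is invertible and its inverse is (1/γ) I_n + (1/γ) Rᵀ (γ I_k − A_s)⁻¹ R A; in particular (γ I_n − A) · ((1/γ) I_n + (1/γ) Rᵀ (γ I_k − A_s)⁻¹ R A) = I_n. -/
open Matrix

/-- **Lemma 2 (gImArep).** If `R Rᵀ = I`, `P A = A` with `P = Rᵀ R`, `γ > 0` and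
`γ I_k − A_s` is invertible (`A_s = R A Rᵀ`), then `γ I_n − A` is invertible with the
explicit inverse `(1/γ) I + (1/γ) Rᵀ (γ I_k − A_s)⁻¹ R A`. -/
theorem gImArep (n k : ℕ) (hn : 0 < n) (hk : 0 < k)
    (A : Matrix (Fin n) (Fin n) ℝ) (R : Matrix (Fin k) (Fin n) ℝ)
    (hR : R * Rᵀ = 1) (hPA : (Rᵀ * R) * A = A)
    (γ : ℝ) (hγ : 0 < γ)
    (hinv : IsUnit (γ • (1 : Matrix (Fin k) (Fin k) ℝ) - R * A * Rᵀ).det) :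
    IsUnit (γ • (1 : Matrix (Fin n) (Fin n) ℝ) - A).det ∧
    (γ • (1 : Matrix (Fin n) (Fin n) ℝ) - A)⁻¹ =
      γ⁻¹ • (1 : Matrix (Fin n) (Fin n) ℝ) +
        γ⁻¹ • (Rᵀ * (γ • (1 : Matrix (Fin k) (Fin k) ℝ) - R * A * Rᵀ)⁻¹ * (R * A)) ∧
    (γ • (1 : Matrix (Fin n) (Fin n) ℝ) - A) *
        (γ⁻¹ • (1 : Matrix (Fin n) (Fin n) ℝ) +
          γ⁻¹ • (Rᵀ * (γ • (1 : Matrix (Fin k) (Fin k) ℝ) - R * A * Rᵀ)⁻¹ * (R * A))) = 1 := by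
  set S : Matrix (Fin k) (Fin k) ℝ := γ • (1 : Matrix (Fin k) (Fin k) ℝ) - R * A * Rᵀ with hS
  have hSS : S * S⁻¹ = 1 := Matrix.mul_nonsing_inv _ hinv
  have key : (γ • (1 : Matrix (Fin n) (Fin n) ℝ) - A) * Rᵀ = Rᵀ * S := by
    rw [hS, Matrix.sub_mul, Matrix.mul_sub, Matrix.smul_mul, Matrix.mul_smul, Matrix.one_mul,
      Matrix.mul_one]
    congr 1
    conv_lhs => rw [← hPA]
    simp only [Matrix.mul_assoc]
  have hRA : Rᵀ * (R * A) = A := by rw [← Matrix.mul_assoc, hPA]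
  have main : (γ • (1 : Matrix (Fin n) (Fin n) ℝ) - A) *
        (γ⁻¹ • (1 : Matrix (Fin n) (Fin n) ℝ) +
          γ⁻¹ • (Rᵀ * S⁻¹ * (R * A))) = 1 := by
    rw [Matrix.mul_add, Matrix.mul_smul, Matrix.mul_one, Matrix.mul_smul]
    have h2 : (γ • (1 : Matrix (Fin n) (Fin n) ℝ) - A) * (Rᵀ * S⁻¹ * (R * A)) = A := by
      calc (γ • (1 : Matrix (Fin n) (Fin n) ℝ) - A) * (Rᵀ * S⁻¹ * (R * A))
          = ((γ • (1 : Matrix (Fin n) (Fin n) ℝ) - A) * Rᵀ) * S⁻¹ * (R * A) := by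
            simp only [Matrix.mul_assoc]
        _ = Rᵀ * (S * S⁻¹) * (R * A) := by rw [key]; simp only [Matrix.mul_assoc]
        _ = A := by rw [hSS, Matrix.mul_one, hRA]
    rw [h2, smul_sub, smul_smul, inv_mul_cancel₀ hγ.ne', one_smul]
    abel
  have hdet : IsUnit (γ • (1 : Matrix (Fin n) (Fin n) ℝ) - A).det := by
    have := congrArg Matrix.det main
    rw [Matrix.det_mul, Matrix.det_one] at this
    exact IsUnit.of_mul_eq_one _ this
  exact ⟨hdet, Matrix.inv_eq_right_inv main, main⟩
end

section
/- Let n, k be positive integers, A an n×n real matrix, R a k×n real matrix with R Rᵀ = I_k, P := Rᵀ R, and assume P A = A. Set A_s := R A Rᵀ. If A_s is symmetric and negative definite (xᵀ A_s x < 0 for every nonzero x ∈ ℝᵏ), then for every γ > 0 the matrix γ I_n − A is invertible. -/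
open Matrix

/-- If `R Rᵀ = I`, `P A = A` with `P = Rᵀ R`, and `A_s = R A Rᵀ` is symmetric and
negative definite, then for every `γ > 0` the matrix `γ I_n − A` is invertible. -/
theorem gImA_invertible (n k : ℕ) (hn : 0 < n) (hk : 0 < k)
    (A : Matrix (Fin n) (Fin n) ℝ) (R : Matrix (Fin k) (Fin n) ℝ)
    (hR : R * Rᵀ = 1) (hPA : (Rᵀ * R) * A = A)
    (hsymm : (R * A * Rᵀ)ᵀ = R * A * Rᵀ)
    (hnegdef : ∀ x : Fin k → ℝ, x ≠ 0 → x ⬝ᵥ (R * A * Rᵀ).mulVec x < 0) :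
    ∀ γ : ℝ, 0 < γ → IsUnit (γ • (1 : Matrix (Fin n) (Fin n) ℝ) - A).det := by
  intro γ hγ
  rw [isUnit_iff_ne_zero]
  intro hdet
  obtain ⟨v, hv, hmv⟩ := (Matrix.exists_mulVec_eq_zero_iff).2 hdet
  -- A v = γ v
  have hAv : A.mulVec v = γ • v := by
    have := hmv
    rw [Matrix.sub_mulVec, Matrix.smul_mulVec, Matrix.one_mulVec, sub_eq_zero] at this
    exact this.symm
  -- P v = v
  have hPv : (Rᵀ * R).mulVec v = v := by
    have h1 : (Rᵀ * R).mulVec (A.mulVec v) = A.mulVec v := by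
      rw [Matrix.mulVec_mulVec, hPA]
    rw [hAv, Matrix.mulVec_smul] at h1
    have := smul_right_injective (Fin n → ℝ) (ne_of_gt hγ) h1
    exact this
  set w := R.mulVec v with hw
  have hvw : Rᵀ.mulVec w = v := by
    rw [hw, Matrix.mulVec_mulVec, hPv]
  have hwne : w ≠ 0 := by
    intro h0
    apply hv
    rw [← hvw, h0, Matrix.mulVec_zero]
  have hAsw : (R * A * Rᵀ).mulVec w = γ • w := by
    rw [show R * A * Rᵀ = R * (A * Rᵀ) from Matrix.mul_assoc _ _ _, ← Matrix.mulVec_mulVec,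
      ← Matrix.mulVec_mulVec, hvw, hAv, Matrix.mulVec_smul]
  have hlt := hnegdef w hwne
  rw [hAsw, dotProduct_smul, smul_eq_mul] at hlt
  have hww : 0 < w ⬝ᵥ w := by
    rcases lt_or_eq_of_le (Finset.sum_nonneg fun i _ => mul_self_nonneg (w i)) with h | h
    · exact h
    · exact absurd (dotProduct_self_eq_zero.1 h.symm) hwne
  exact absurd hlt (not_lt.2 (le_of_lt (mul_pos hγ hww)))
end

section
/- Let n, k be positive integers, A an n×n real matrix, R a k×n real matrix with R Rᵀ = I_k, P := Rᵀ R, and assume P A = A. Set A_s := R A Rᵀ and suppose A_s is invertible. Then for every t ∈ ℝ and every vector b ∈ ℝⁿ, exp(t A) b = b + Rᵀ ( A_s⁻¹ (exp(t A_s) − I_k) (R A b) ). Equivalently, the solution of y' = A y, y(0) = b at time t equals b + Rᵀ ( t φ₁(t A_s) b_s ) with b_s := R A b and φ₁(z) = (eᶻ − 1)/z. -/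
open Matrix

section Aux

variable {𝔸 : Type*} [NormedRing 𝔸] [NormedAlgebra ℝ 𝔸] [CompleteSpace 𝔸]

/-- The series `∑ x^m/(m+1)!` (i.e. `φ₁(x)`) is summable. -/
lemma phi_summable (x : 𝔸) :
    Summable fun m : ℕ => (((m + 1).factorial : ℝ))⁻¹ • x ^ m := by
  refine Summable.of_norm_bounded
    (NormedSpace.norm_expSeries_summable' (𝕂 := ℝ) x) ?_
  intro m
  show ‖(((m + 1).factorial : ℝ))⁻¹ • x ^ m‖ ≤ ‖((m.factorial : ℝ))⁻¹ • x ^ m‖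
  simp only [norm_smul, norm_inv, Real.norm_natCast]
  refine mul_le_mul_of_nonneg_right ?_ (norm_nonneg _)
  refine inv_anti₀ ?_ ?_
  · exact_mod_cast Nat.factorial_pos m
  · exact_mod_cast Nat.factorial_le (Nat.le_succ m)

/-- `exp x = 1 + x * ∑ x^m/(m+1)!`. -/
lemma exp_eq_one_add_mul_phi (x : 𝔸) :
    NormedSpace.exp x = 1 + x * ∑' m : ℕ, (((m + 1).factorial : ℝ))⁻¹ • x ^ m := by
  simp only [NormedSpace.exp_eq_tsum ℝ]
  rw [Summable.tsum_eq_zero_add (NormedSpace.expSeries_summable' (𝕂 := ℝ) x)]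
  congr 1
  · simp
  · rw [← (phi_summable x).tsum_mul_left x]
    refine tsum_congr fun m => ?_
    rw [mul_smul_comm, ← pow_succ']

lemma mul_phi_comm (x : 𝔸) :
    x * (∑' m : ℕ, (((m + 1).factorial : ℝ))⁻¹ • x ^ m) =
      (∑' m : ℕ, (((m + 1).factorial : ℝ))⁻¹ • x ^ m) * x := by
  rw [← (phi_summable x).tsum_mul_left x, ← (phi_summable x).tsum_mul_right x]
  refine tsum_congr fun m => ?_
  rw [mul_smul_comm, smul_mul_assoc, ← pow_succ, ← pow_succ']

end Aux

/-- **Lemma 1 (exactsolrep).** If `R Rᵀ = 1`, `P A = A` with `P = Rᵀ R`, and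
`A_s = R A Rᵀ` is invertible, then for all `t` and `b`,
`exp(t A) b = b + Rᵀ (A_s⁻¹ (exp(t A_s) − I) (R A b))`,
i.e. the solution of `y' = A y`, `y(0) = b` equals `b + Rᵀ (t φ₁(t A_s) b_s)`. -/
theorem exactsolrep (n k : ℕ) (hn : 0 < n) (hk : 0 < k)
    (A : Matrix (Fin n) (Fin n) ℝ) (R : Matrix (Fin k) (Fin n) ℝ)
    (hR : R * Rᵀ = 1) (hPA : (Rᵀ * R) * A = A)
    (hAs : IsUnit (R * A * Rᵀ).det) :
    ∀ (t : ℝ) (b : Fin n → ℝ),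
      (NormedSpace.exp (t • A)).mulVec b =
        b + Rᵀ.mulVec
          (((R * A * Rᵀ)⁻¹ *
              (NormedSpace.exp (t • (R * A * Rᵀ)) - 1)).mulVec
            (R.mulVec (A.mulVec b))) := by
  letI : SeminormedRing (Matrix (Fin n) (Fin n) ℝ) := Matrix.linftyOpSemiNormedRing
  letI : NormedRing (Matrix (Fin n) (Fin n) ℝ) := Matrix.linftyOpNormedRing
  letI : NormedAlgebra ℝ (Matrix (Fin n) (Fin n) ℝ) := Matrix.linftyOpNormedAlgebra
  letI : SeminormedRing (Matrix (Fin k) (Fin k) ℝ) := Matrix.linftyOpSemiNormedRing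
  letI : NormedRing (Matrix (Fin k) (Fin k) ℝ) := Matrix.linftyOpNormedRing
  letI : NormedAlgebra ℝ (Matrix (Fin k) (Fin k) ℝ) := Matrix.linftyOpNormedAlgebra
  set As : Matrix (Fin k) (Fin k) ℝ := R * A * Rᵀ with hAsdef
  -- basic algebraic identities
  have hRA : Rᵀ * (R * A) = A := by rw [← Matrix.mul_assoc]; exact hPA
  have hARt : A * Rᵀ = Rᵀ * As := by
    calc A * Rᵀ = (Rᵀ * R * A) * Rᵀ := by rw [hPA]
    _ = Rᵀ * As := by simp only [hAsdef, Matrix.mul_assoc]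
  -- the key power identity
  have hpow : ∀ m : ℕ, Rᵀ * (As ^ m * (R * A)) = A ^ m * A := by
    intro m
    induction m with
    | zero => simpa using hRA
    | succ m ih =>
      calc Rᵀ * (As ^ (m + 1) * (R * A))
          = (Rᵀ * As) * (As ^ m * (R * A)) := by
            rw [pow_succ']; simp only [Matrix.mul_assoc]
        _ = A * (Rᵀ * (As ^ m * (R * A))) := by rw [← hARt]; simp only [Matrix.mul_assoc]
        _ = A ^ (m + 1) * A := by rw [ih, pow_succ']; simp only [Matrix.mul_assoc]
  intro t b
  -- the matrix-level identity
  set S : Matrix (Fin n) (Fin n) ℝ :=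
    ∑' m : ℕ, (((m + 1).factorial : ℝ))⁻¹ • (t • A) ^ m with hSdef
  set Ss : Matrix (Fin k) (Fin k) ℝ :=
    ∑' m : ℕ, (((m + 1).factorial : ℝ))⁻¹ • (t • As) ^ m with hSsdef
  -- sandwiching `Ss` between `Rᵀ` and `R * A` gives `S * A`
  have hL : Rᵀ * Ss * (R * A) = S * A := by
    let L : Matrix (Fin k) (Fin k) ℝ →ₗ[ℝ] Matrix (Fin n) (Fin n) ℝ :=
      { toFun := fun X => Rᵀ * X * (R * A)
        map_add' := by intro X Y; simp [Matrix.mul_add, Matrix.add_mul]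
        map_smul' := by intro c X; simp [Matrix.mul_smul, Matrix.smul_mul] }
    have hLc : Rᵀ * Ss * (R * A) = (LinearMap.toContinuousLinearMap L) Ss := rfl
    rw [hLc, hSsdef, ContinuousLinearMap.map_tsum (LinearMap.toContinuousLinearMap L) (phi_summable (t • As))]
    have hterm : ∀ m : ℕ, (LinearMap.toContinuousLinearMap L)
        ((((m + 1).factorial : ℝ))⁻¹ • (t • As) ^ m)
        = (((m + 1).factorial : ℝ))⁻¹ • ((t • A) ^ m * A) := by
      intro m
      have h1 : (LinearMap.toContinuousLinearMap L)
          ((((m + 1).factorial : ℝ))⁻¹ • (t • As) ^ m)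
          = (((m + 1).factorial : ℝ))⁻¹ • (Rᵀ * ((t • As) ^ m * (R * A))) := by
        simp only [LinearMap.coe_toContinuousLinearMap', LinearMap.coe_mk, AddHom.coe_mk, L,
          Matrix.smul_mul, Matrix.mul_smul, Matrix.mul_assoc]
      rw [h1]
      congr 1
      simp only [smul_pow, Matrix.smul_mul, Matrix.mul_smul, hpow m]
    rw [tsum_congr hterm, hSdef]
    erw [← Summable.tsum_mul_right A (phi_summable (t • A))]
    refine tsum_congr fun m => ?_
    rw [Matrix.smul_mul]
  -- the main matrix identity
  have key : NormedSpace.exp (t • A) =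
      1 + Rᵀ * (As⁻¹ * (NormedSpace.exp (t • As) - 1)) * (R * A) := by
    have hexps : NormedSpace.exp (t • As) - 1 = (t • As) * Ss := by
      erw [exp_eq_one_add_mul_phi (t • As), ← hSsdef, add_sub_cancel_left]
    have hinv : As⁻¹ * ((t • As) * Ss) = t • Ss := by
      rw [Matrix.smul_mul, Matrix.mul_smul, ← Matrix.mul_assoc,
        Matrix.nonsing_inv_mul As hAs, Matrix.one_mul]
    rw [hexps, hinv]
    have hmv : Rᵀ * (t • Ss) * (R * A) = t • (Rᵀ * Ss * (R * A)) := by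
      rw [Matrix.mul_smul, Matrix.smul_mul]
    erw [hmv, hL, exp_eq_one_add_mul_phi (t • A), ← hSdef, mul_phi_comm (t • A)]
    congr 1
    exact mul_smul_comm t S A
  -- conclude for vectors
  rw [key]
  rw [Matrix.add_mulVec, Matrix.one_mulVec]
  congr 1
  rw [Matrix.mulVec_mulVec, Matrix.mulVec_mulVec, Matrix.mulVec_mulVec]
  congr 1
  simp only [Matrix.mul_assoc]
end

section
/- Let n, k be positive integers, A an n×n real matrix, R a k×n real matrix with R Rᵀ = I_k, P := Rᵀ R, and assume P A = A. Set A_s := R A Rᵀ. If γ > 0 and γ I_k − A_s is invertible, then for every b ∈ ℝⁿ, (γ I_n − A)⁻¹ b = (1/γ) b + (1/γ) Rᵀ ( (γ I_k − A_s)⁻¹ (R A b) ). -/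
open Matrix

/-- If `R Rᵀ = I`, `P A = A` with `P = Rᵀ R`, `γ > 0` and `γ I_k − A_s` is invertible
(`A_s = R A Rᵀ`), then for every `b`,
`(γ I_n − A)⁻¹ b = (1/γ) b + (1/γ) Rᵀ ((γ I_k − A_s)⁻¹ (R A b))`. -/
theorem resolvent_apply (n k : ℕ) (hn : 0 < n) (hk : 0 < k)
    (A : Matrix (Fin n) (Fin n) ℝ) (R : Matrix (Fin k) (Fin n) ℝ)
    (hR : R * Rᵀ = 1) (hPA : (Rᵀ * R) * A = A)
    (γ : ℝ) (hγ : 0 < γ)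
    (hinv : IsUnit (γ • (1 : Matrix (Fin k) (Fin k) ℝ) - R * A * Rᵀ).det) :
    ∀ b : Fin n → ℝ,
      (γ • (1 : Matrix (Fin n) (Fin n) ℝ) - A)⁻¹.mulVec b =
        γ⁻¹ • b +
          γ⁻¹ • Rᵀ.mulVec
            ((γ • (1 : Matrix (Fin k) (Fin k) ℝ) - R * A * Rᵀ)⁻¹.mulVec
              (R.mulVec (A.mulVec b))) := by
  intro b
  set S : Matrix (Fin k) (Fin k) ℝ := γ • (1 : Matrix (Fin k) (Fin k) ℝ) - R * A * Rᵀ with hS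
  set M : Matrix (Fin n) (Fin n) ℝ := γ • (1 : Matrix (Fin n) (Fin n) ℝ) - A with hM
  set N : Matrix (Fin n) (Fin n) ℝ :=
    γ⁻¹ • (1 : Matrix (Fin n) (Fin n) ℝ) + γ⁻¹ • (Rᵀ * S⁻¹ * (R * A)) with hN
  have hSS : S * S⁻¹ = 1 := Matrix.mul_nonsing_inv _ hinv
  have hRtS : M * Rᵀ = Rᵀ * S := by
    have hARt : Rᵀ * (R * A) * Rᵀ = A * Rᵀ := by
      rw [← Matrix.mul_assoc, hPA]
    simp only [hM, hS, Matrix.sub_mul, Matrix.mul_sub, Matrix.smul_mul, Matrix.mul_smul,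
      Matrix.one_mul, Matrix.mul_one]
    rw [← Matrix.mul_assoc, ← hARt, Matrix.mul_assoc, Matrix.mul_assoc]
  have hMN : M * N = 1 := by
    have h1 : M * (Rᵀ * S⁻¹ * (R * A)) = Rᵀ * (R * A) := by
      calc M * (Rᵀ * S⁻¹ * (R * A)) = (M * Rᵀ) * S⁻¹ * (R * A) := by
            simp only [Matrix.mul_assoc]
        _ = Rᵀ * (S * S⁻¹) * (R * A) := by rw [hRtS]; simp only [Matrix.mul_assoc]
        _ = Rᵀ * (R * A) := by rw [hSS, Matrix.mul_one]
    rw [hN, Matrix.mul_add, Matrix.mul_smul, Matrix.mul_smul, h1, ← Matrix.mul_assoc, hPA,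
      hM, Matrix.sub_mul, Matrix.smul_mul, Matrix.one_mul, smul_sub]
    rw [smul_smul, inv_mul_cancel₀ hγ.ne', one_smul, Matrix.mul_one]
    abel
  have hMinv : M⁻¹ = N := Matrix.inv_eq_right_inv hMN
  rw [hMinv, hN, Matrix.add_mulVec, Matrix.smul_mulVec, Matrix.smul_mulVec,
    Matrix.one_mulVec, ← Matrix.mulVec_mulVec, ← Matrix.mulVec_mulVec, ← Matrix.mulVec_mulVec]
end

section
/- Let n, k be positive integers, A an n×n real matrix, R a k×n real matrix with R Rᵀ = I_k, P := Rᵀ R, and assume P A = A. Set A_s := R A Rᵀ, let b ∈ ℝⁿ, and set b_s := R A b. Suppose γ > 0 and γ I_k − A_s is invertible, write C := (γ I_n − A)⁻¹ and C_s := (γ I_k − A_s)⁻¹. Then for every m ≥ 2, the extended Krylov subspace span{ b, A b, C b, C² b, …, C^{m−2} b } ⊆ ℝⁿ equals span{b} + Rᵀ·span{ b_s, C_s b_s, …, C_s^{m−2} b_s }, where Rᵀ·V denotes the image of the subspace V ⊆ ℝᵏ under the linear map x ↦ Rᵀ x. -/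
open Matrix

/-- **Lemma 3 (subspace form).** With `R Rᵀ = I`, `P A = A` (`P = Rᵀ R`), `A_s = R A Rᵀ`,
`b_s = R A b`, `γ > 0`, `γ I_k − A_s` invertible, `C = (γ I_n − A)⁻¹`,
`C_s = (γ I_k − A_s)⁻¹`, and `m ≥ 2`, the extended Krylov subspace
`span{b, A b, C b, …, C^{m−2} b}` equals `span{b} + Rᵀ · span{b_s, C_s b_s, …, C_s^{m−2} b_s}`.
(Note `C⁰ b = b`, so `{b, C b, …, C^{m−2} b} = {C^i b : i ≤ m−2}`.) -/
theorem extended_krylov_eq (n k : ℕ) (hn : 0 < n) (hk : 0 < k)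
    (A : Matrix (Fin n) (Fin n) ℝ) (R : Matrix (Fin k) (Fin n) ℝ)
    (hR : R * Rᵀ = 1) (hPA : (Rᵀ * R) * A = A)
    (b : Fin n → ℝ)
    (γ : ℝ) (hγ : 0 < γ)
    (hinv : IsUnit (γ • (1 : Matrix (Fin k) (Fin k) ℝ) - R * A * Rᵀ).det) :
    ∀ m : ℕ, 2 ≤ m →
      Submodule.span ℝ
          ({A.mulVec b} ∪
            {x : Fin n → ℝ | ∃ i ≤ m - 2,
              x = (((γ • (1 : Matrix (Fin n) (Fin n) ℝ) - A)⁻¹) ^ i).mulVec b}) =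
        Submodule.span ℝ {b} ⊔
          Submodule.map (Matrix.mulVecLin Rᵀ)
            (Submodule.span ℝ
              {x : Fin k → ℝ | ∃ i ≤ m - 2,
                x = (((γ • (1 : Matrix (Fin k) (Fin k) ℝ) - R * A * Rᵀ)⁻¹) ^ i).mulVec
                  (R.mulVec (A.mulVec b))}) := by
  intro m hm
  have hγ0 : γ ≠ 0 := ne_of_gt hγ
  set N : Matrix (Fin n) (Fin n) ℝ := γ • 1 - A with hN
  set Ns : Matrix (Fin k) (Fin k) ℝ := γ • 1 - R * A * Rᵀ with hNs
  -- A = Rᵀ * (R * A)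
  have hA' : A = Rᵀ * (R * A) := by rw [← Matrix.mul_assoc, hPA]
  -- determinant of N is a unit
  have hdetN : IsUnit N.det := by
    have h1 : N = γ • (1 - (γ⁻¹ • Rᵀ) * (R * A)) := by
      rw [smul_sub, Matrix.smul_mul, smul_smul, mul_inv_cancel₀ hγ0, one_smul, ← hA']
    have h2 : Ns = γ • (1 - (R * A) * (γ⁻¹ • Rᵀ)) := by
      rw [smul_sub, Matrix.mul_smul, smul_smul, mul_inv_cancel₀ hγ0, one_smul, hNs,
        Matrix.mul_assoc]
    rw [h1, Matrix.det_smul, Matrix.det_one_sub_mul_comm]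
    rw [h2, Matrix.det_smul] at hinv
    simpa only [Fintype.card_fin] using ((isUnit_iff_ne_zero.mpr hγ0).pow n).mul
      (isUnit_of_mul_isUnit_right hinv)
  have hdetNs : IsUnit Ns.det := hinv
  set C : Matrix (Fin n) (Fin n) ℝ := N⁻¹ with hC
  set Cs : Matrix (Fin k) (Fin k) ℝ := Ns⁻¹ with hCs
  have hCN : C * N = 1 := Matrix.nonsing_inv_mul N hdetN
  have hNC : N * C = 1 := Matrix.mul_nonsing_inv N hdetN
  have hNsCs : Ns * Cs = 1 := Matrix.mul_nonsing_inv Ns hdetNs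
  -- A * Rᵀ = Rᵀ * (R * A * Rᵀ)
  have hARt : A * Rᵀ = Rᵀ * (R * A * Rᵀ) := by
    calc A * Rᵀ = (Rᵀ * R * A) * Rᵀ := by rw [hPA]
    _ = Rᵀ * (R * A * Rᵀ) := by simp only [Matrix.mul_assoc]
  have hNRt : N * Rᵀ = Rᵀ * Ns := by
    rw [hN, hNs, Matrix.sub_mul, Matrix.mul_sub, Matrix.smul_mul, Matrix.mul_smul,
      Matrix.one_mul, Matrix.mul_one, hARt]
  -- C * Rᵀ = Rᵀ * Cs
  have hCRt : C * Rᵀ = Rᵀ * Cs := by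
    calc C * Rᵀ = C * Rᵀ * (Ns * Cs) := by rw [hNsCs, Matrix.mul_one]
    _ = C * N * Rᵀ * Cs := by rw [← Matrix.mul_assoc (C * Rᵀ), Matrix.mul_assoc C Rᵀ Ns,
        ← hNRt, Matrix.mul_assoc C N Rᵀ]
    _ = Rᵀ * Cs := by rw [hCN, Matrix.one_mul]
  have hCRi : ∀ i : ℕ, C ^ i * Rᵀ = Rᵀ * Cs ^ i := by
    intro i
    induction i with
    | zero => simp
    | succ j ih =>
      rw [pow_succ, pow_succ, Matrix.mul_assoc, hCRt, ← Matrix.mul_assoc, ih, Matrix.mul_assoc]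
  -- key vector identity : C^i (A b) = Rᵀ (Cs^i b_s)
  have hvec : ∀ i : ℕ, (C ^ i).mulVec (A.mulVec b)
      = (Matrix.mulVecLin Rᵀ) ((Cs ^ i).mulVec (R.mulVec (A.mulVec b))) := by
    intro i
    have : C ^ i * A = Rᵀ * (Cs ^ i * (R * A)) := by
      calc C ^ i * A = C ^ i * (Rᵀ * (R * A)) := by rw [← hA']
      _ = (C ^ i * Rᵀ) * (R * A) := by rw [Matrix.mul_assoc]
      _ = Rᵀ * (Cs ^ i * (R * A)) := by rw [hCRi i, Matrix.mul_assoc]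
    simp only [Matrix.mulVecLin_apply, Matrix.mulVec_mulVec, this]
  -- recurrence : γ • C^(i+1) = C^i + C^(i+1) * A
  have hrec : ∀ i : ℕ, γ • C ^ (i + 1) = C ^ i + C ^ (i + 1) * A := by
    intro i
    have h1 : γ • C = 1 + C * A := by
      have := hCN
      rw [hN, Matrix.mul_sub, Matrix.mul_smul, Matrix.mul_one] at this
      exact eq_add_of_sub_eq this
    calc γ • C ^ (i + 1) = C ^ i * (γ • C) := by rw [pow_succ, Matrix.mul_smul]
    _ = C ^ i + C ^ (i + 1) * A := by rw [h1, Matrix.mul_add, Matrix.mul_one, pow_succ,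
        Matrix.mul_assoc]
  -- the two spanning sets
  set S₁ : Set (Fin n → ℝ) := {A.mulVec b} ∪
      {x : Fin n → ℝ | ∃ i ≤ m - 2, x = (C ^ i).mulVec b} with hS₁
  set S₂ : Set (Fin k → ℝ) :=
      {x : Fin k → ℝ | ∃ i ≤ m - 2, x = (Cs ^ i).mulVec (R.mulVec (A.mulVec b))} with hS₂
  -- membership of C^i b in the RHS
  have hb_mem : ∀ i ≤ m - 2, (C ^ i).mulVec b ∈
      Submodule.span ℝ {b} ⊔ Submodule.map (Matrix.mulVecLin Rᵀ) (Submodule.span ℝ S₂) := by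
    intro i hi
    induction i with
    | zero =>
      simp only [pow_zero, Matrix.one_mulVec]
      exact Submodule.mem_sup_left (Submodule.mem_span_singleton_self b)
    | succ j ih =>
      have hj : j ≤ m - 2 := Nat.le_of_succ_le hi
      have h1 : γ • (C ^ (j + 1)).mulVec b
          = (C ^ j).mulVec b + (C ^ (j + 1)).mulVec (A.mulVec b) := by
        have := congrArg (fun M : Matrix (Fin n) (Fin n) ℝ => M.mulVec b) (hrec j)
        simpa [Matrix.add_mulVec, Matrix.smul_mulVec, Matrix.mulVec_mulVec] using this
      have h2 : (C ^ (j + 1)).mulVec b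
          = γ⁻¹ • ((C ^ j).mulVec b + (C ^ (j + 1)).mulVec (A.mulVec b)) := by
        rw [← h1, smul_smul, inv_mul_cancel₀ hγ0, one_smul]
      rw [h2]
      refine Submodule.smul_mem _ _ (Submodule.add_mem _ (ih hj) ?_)
      rw [hvec (j + 1)]
      exact Submodule.mem_sup_right (Submodule.mem_map_of_mem
        (Submodule.subset_span ⟨j + 1, hi, rfl⟩))
  refine le_antisymm ?_ ?_
  · rw [Submodule.span_le]
    rintro x (hx | ⟨i, hi, rfl⟩)
    · -- x = A b = C^0 (A b)
      rw [Set.mem_singleton_iff] at hx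
      subst hx
      have := hvec 0
      simp only [pow_zero, Matrix.one_mulVec] at this
      rw [this]
      exact Submodule.mem_sup_right (Submodule.mem_map_of_mem
        (Submodule.subset_span ⟨0, Nat.zero_le _, by simp⟩))
    · exact hb_mem i hi
  · refine sup_le ?_ ?_
    · rw [Submodule.span_le, Set.singleton_subset_iff]
      refine Submodule.subset_span (Set.mem_union_right _ ⟨0, Nat.zero_le _, by simp⟩)
    · rw [Submodule.map_span, Submodule.span_le]
      rintro x ⟨y, ⟨i, hi, rfl⟩, rfl⟩
      -- Rᵀ (Cs^i b_s) = C^i (A b)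
      have hx : (Matrix.mulVecLin Rᵀ) ((Cs ^ i).mulVec (R.mulVec (A.mulVec b)))
          = (C ^ i).mulVec (A.mulVec b) := (hvec i).symm
      rw [hx]
      cases i with
      | zero =>
        simp only [pow_zero, Matrix.one_mulVec]
        exact Submodule.subset_span (Set.mem_union_left _ rfl)
      | succ j =>
        have hj : j ≤ m - 2 := Nat.le_of_succ_le hi
        have h1 : (C ^ (j + 1)).mulVec (A.mulVec b)
            = γ • (C ^ (j + 1)).mulVec b - (C ^ j).mulVec b := by
          have := congrArg (fun M : Matrix (Fin n) (Fin n) ℝ => M.mulVec b) (hrec j)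
          simp only [Matrix.add_mulVec, Matrix.smul_mulVec] at this
          rw [eq_sub_iff_add_eq, add_comm]
          simpa only [Matrix.mulVec_mulVec] using this.symm
        rw [h1]
        refine Submodule.sub_mem _ (Submodule.smul_mem _ _ ?_) ?_
        · exact Submodule.subset_span (Set.mem_union_right _ ⟨j + 1, hi, rfl⟩)
        · exact Submodule.subset_span (Set.mem_union_right _ ⟨j, hj, rfl⟩)
end

section
/- Let n, k, m be positive integers with m ≥ 2, A an n×n real matrix, R a k×n real matrix with R Rᵀ = I_k, P := Rᵀ R, and assume P A = A. Set A_s := R A Rᵀ. Let b ∈ ℝⁿ with b ≠ 0 and R b = 0, set b_s := R A b and assume b_s ≠ 0. Let W be a k×(m−1) real matrix with orthonormal columns (Wᵀ W = I_{m−1}) whose first column is b_s/‖b_s‖. Define the n×m matrix V whose first column is b/‖b‖ and whose remaining m−1 columns are those of Rᵀ W. Then S := Vᵀ A V has the block form: the (1,1) entry of S is 0, the first row of S is zero, the first column of S below the diagonal equals (‖b_s‖/‖b‖) e₁ (where e₁ ∈ ℝ^{m−1} is the first standard basis vector), and the lower-right (m−1)×(m−1) block of S equals S̃ := Wᵀ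 A_s W. -/
open Matrix

/-- The Euclidean norm of a vector. -/
noncomputable def vecEnorm {ι : Type*} [Fintype ι] (v : ι → ℝ) : ℝ :=
  Real.sqrt (∑ i, v i ^ 2)

lemma vecEnorm_ne_zero {ι : Type*} [Fintype ι] {v : ι → ℝ} (h : v ≠ 0) : vecEnorm v ≠ 0 := by
  intro h0
  apply h
  have hnn : (0:ℝ) ≤ ∑ i, v i ^ 2 := Finset.sum_nonneg fun i _ => sq_nonneg _
  have hsum : ∑ i, v i ^ 2 = 0 := le_antisymm (Real.sqrt_eq_zero'.mp h0) hnn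
  funext i
  have := (Finset.sum_eq_zero_iff_of_nonneg (fun i _ => sq_nonneg (v i))).mp hsum i
    (Finset.mem_univ i)
  exact pow_eq_zero_iff (n := 2) (by norm_num) |>.mp this

/-- **Lemma 4 (Smstruct), block structure.** Here `m = p + 1` with `p ≥ 1` (i.e. `m ≥ 2`).
With `R Rᵀ = I`, `P A = A` (`P = Rᵀ R`), `A_s = R A Rᵀ`, `b ≠ 0`, `R b = 0`,
`b_s = R A b ≠ 0`, `W` a `k×p` matrix with orthonormal columns whose first column is
`b_s/‖b_s‖`, and `V = [b/‖b‖ | Rᵀ W]`, the compression `S = Vᵀ A V` satisfies: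
`S₀₀ = 0`, the first row of `S` is zero, the first column below the diagonal is
`(‖b_s‖/‖b‖) e₁`, and the lower-right `p×p` block is `S̃ = Wᵀ A_s W`. -/
theorem Smstruct (n k p : ℕ) (hn : 0 < n) (hk : 0 < k) (hp : 1 ≤ p)
    (A : Matrix (Fin n) (Fin n) ℝ) (R : Matrix (Fin k) (Fin n) ℝ)
    (hR : R * Rᵀ = 1) (hPA : (Rᵀ * R) * A = A)
    (b : Fin n → ℝ) (hb : b ≠ 0) (hRb : R.mulVec b = 0)
    (hbs : R.mulVec (A.mulVec b) ≠ 0)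
    (W : Matrix (Fin k) (Fin p) ℝ) (hW : Wᵀ * W = 1)
    (hWcol : ∀ i, W i ⟨0, hp⟩ = R.mulVec (A.mulVec b) i / vecEnorm (R.mulVec (A.mulVec b)))
    (V : Matrix (Fin n) (Fin (p + 1)) ℝ)
    (hVcol0 : ∀ i, V i 0 = b i / vecEnorm b)
    (hVcols : ∀ i (j : Fin p), V i j.succ = (Rᵀ * W) i j) :
    (Vᵀ * A * V) 0 0 = 0 ∧
    (∀ j : Fin (p + 1), (Vᵀ * A * V) 0 j = 0) ∧
    (∀ i : Fin p, (Vᵀ * A * V) i.succ 0 =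
      (vecEnorm (R.mulVec (A.mulVec b)) / vecEnorm b) * (if i = ⟨0, hp⟩ then 1 else 0)) ∧
    (∀ i j : Fin p, (Vᵀ * A * V) i.succ j.succ = (Wᵀ * (R * A * Rᵀ) * W) i j) := by
  have hc : vecEnorm (R.mulVec (A.mulVec b)) ≠ 0 := vecEnorm_ne_zero hbs
  have hA : Rᵀ * (R * A) = A := by rw [← Matrix.mul_assoc, hPA]
  have hbR : b ᵥ* Rᵀ = 0 := by rw [Matrix.vecMul_transpose, hRb]
  have hbA : ∀ a, ∑ x, b x * A x a = 0 := by
    intro a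
    have h : b ᵥ* A = 0 := by
      conv_lhs => rw [← hA]
      rw [← Matrix.vecMul_vecMul, hbR, Matrix.zero_vecMul]
    have := congrFun h a
    simpa [Matrix.vecMul, dotProduct] using this
  -- row zero
  have hrow : ∀ j : Fin (p+1), (Vᵀ * A * V) 0 j = 0 := by
    intro j
    rw [Matrix.mul_assoc]
    simp only [Matrix.mul_apply, Matrix.transpose_apply]
    have : ∀ x, V x 0 * ∑ y, A x y * V y j = ∑ y, (b x / vecEnorm b) * (A x y * V y j) := by
      intro x; rw [hVcol0, Finset.mul_sum]
    rw [Finset.sum_congr rfl fun x _ => this x, Finset.sum_comm]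
    apply Finset.sum_eq_zero
    intro y _
    have : ∑ x, b x / vecEnorm b * (A x y * V y j) = (∑ x, b x * A x y) * V y j / vecEnorm b := by
      rw [Finset.sum_mul, Finset.sum_div]
      apply Finset.sum_congr rfl
      intro x _; ring
    rw [this, hbA, zero_mul, zero_div]
  -- W orthonormality against bs
  have hWbs : ∀ i : Fin p, ∑ l, W l i * (R.mulVec (A.mulVec b)) l =
      vecEnorm (R.mulVec (A.mulVec b)) * (if i = ⟨0, hp⟩ then 1 else 0) := by
    intro i
    have h := congrFun (congrFun hW i) ⟨0, hp⟩
    simp only [Matrix.mul_apply, Matrix.transpose_apply, Matrix.one_apply] at h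
    have h2 : ∑ l, W l i * ((R.mulVec (A.mulVec b)) l / vecEnorm (R.mulVec (A.mulVec b)))
        = if i = ⟨0, hp⟩ then 1 else 0 := by
      rw [← h]
      exact Finset.sum_congr rfl fun l _ => by rw [hWcol]
    calc ∑ l, W l i * (R.mulVec (A.mulVec b)) l
        = (∑ l, W l i * ((R.mulVec (A.mulVec b)) l / vecEnorm (R.mulVec (A.mulVec b)))) *
            vecEnorm (R.mulVec (A.mulVec b)) := by
          rw [Finset.sum_mul]
          exact Finset.sum_congr rfl fun l _ => by
            rw [mul_assoc, div_mul_cancel₀ _ hc]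
      _ = vecEnorm (R.mulVec (A.mulVec b)) * (if i = ⟨0, hp⟩ then 1 else 0) := by
          rw [h2]; ring
  refine ⟨hrow 0, hrow, ?_, ?_⟩
  · -- first column
    intro i
    rw [Matrix.mul_assoc]
    simp only [Matrix.mul_apply, Matrix.transpose_apply]
    have step1 : ∀ x, V x i.succ * ∑ y, A x y * V y 0 =
        ∑ y, (Rᵀ * W) x i * (A x y * (b y / vecEnorm b)) := by
      intro x
      rw [hVcols, Finset.mul_sum]
      exact Finset.sum_congr rfl fun y _ => by rw [hVcol0]
    rw [Finset.sum_congr rfl fun x _ => step1 x, Finset.sum_comm]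
    have step2 : ∀ y, ∑ x, (Rᵀ * W) x i * (A x y * (b y / vecEnorm b)) =
        (∑ l, W l i * (∑ x, R l x * (A x y * b y))) / vecEnorm b := by
      intro y
      simp only [Matrix.mul_apply, Matrix.transpose_apply, Finset.sum_mul]
      rw [Finset.sum_comm, Finset.sum_div]
      apply Finset.sum_congr rfl
      intro l _
      rw [Finset.mul_sum, Finset.sum_div]
      apply Finset.sum_congr rfl
      intro x _
      ring
    rw [Finset.sum_congr rfl fun y _ => step2 y, ← Finset.sum_div, Finset.sum_comm]
    have step3 : ∀ l, ∑ y, W l i * (∑ x, R l x * (A x y * b y)) =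
        W l i * (R.mulVec (A.mulVec b)) l := by
      intro l
      rw [← Finset.mul_sum]
      congr 1
      simp only [Matrix.mulVec, dotProduct, Finset.mul_sum]
      rw [Finset.sum_comm]
    rw [Finset.sum_congr rfl fun l _ => step3 l, hWbs]
    ring
  · -- lower block
    intro i j
    have hblk : Wᵀ * (R * A * Rᵀ) * W = (Rᵀ * W)ᵀ * A * (Rᵀ * W) := by
      simp only [Matrix.transpose_mul, Matrix.transpose_transpose, Matrix.mul_assoc]
    rw [hblk]
    simp only [Matrix.mul_assoc, Matrix.mul_apply, Matrix.transpose_apply]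
    refine Finset.sum_congr rfl fun x _ => ?_
    rw [hVcols]
    simp only [Matrix.mul_apply, Matrix.transpose_apply]
    congr 1
    refine Finset.sum_congr rfl fun y _ => ?_
    rw [hVcols]
    simp only [Matrix.mul_apply, Matrix.transpose_apply]
end

section
/- Let p be a positive integer, T an invertible p×p real matrix, u ∈ ℝᵖ, and let S be the (1+p)×(1+p) real matrix in block form S = [[0, 0ᵀ],[u, T]]. Then for every t ∈ ℝ, exp(t S) e₁ is the vector whose first component is 1 and whose remaining p components are T⁻¹ (exp(t T) − I_p) u, where e₁ ∈ ℝ^{1+p} is the first standard basis vector. -/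
open Matrix
open scoped Nat

section Aux

attribute [local instance] Matrix.linftyOpNormedRing Matrix.linftyOpNormedAlgebra

/-- The entry map as a continuous linear map. -/
noncomputable def entryCLM (k : ℕ) (i j : Fin k) :
    Matrix (Fin k) (Fin k) ℝ →L[ℝ] ℝ :=
  LinearMap.toContinuousLinearMap
    { toFun := fun M => M i j
      map_add' := fun _ _ => rfl
      map_smul' := fun _ _ => rfl }

theorem entryCLM_apply (k : ℕ) (i j : Fin k) (M : Matrix (Fin k) (Fin k) ℝ) :
    entryCLM k i j M = M i j := rfl

theorem exp_entry (k : ℕ) (A : Matrix (Fin k) (Fin k) ℝ) (i j : Fin k) :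
    (NormedSpace.exp A) i j = ∑' (n : ℕ), ((n ! : ℝ)⁻¹ • A ^ n) i j := by
  have h := NormedSpace.expSeries_summable' (𝕂 := ℝ) A
  have := ((entryCLM k i j).map_tsum h).symm
  simpa [entryCLM_apply, NormedSpace.exp_eq_tsum ℝ] using this.symm

theorem exp_entry_summable (k : ℕ) (A : Matrix (Fin k) (Fin k) ℝ) (i j : Fin k) :
    Summable (fun n : ℕ => ((n ! : ℝ)⁻¹ • A ^ n) i j) := by
  have h := NormedSpace.expSeries_summable' (𝕂 := ℝ) A
  exact h.map (entryCLM k i j : Matrix (Fin k) (Fin k) ℝ →ₗ[ℝ] ℝ)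
    (entryCLM k i j).continuous

theorem exp_sub_one_eq (k : ℕ) (A : Matrix (Fin k) (Fin k) ℝ) :
    NormedSpace.exp A - 1 = ∑' (n : ℕ), (((n + 1)! : ℝ)⁻¹ • A ^ (n + 1)) := by
  have h := NormedSpace.expSeries_summable' (𝕂 := ℝ) A
  have h0 := Summable.tsum_eq_zero_add h
  rw [NormedSpace.exp_eq_tsum ℝ]
  beta_reduce
  erw [h0]
  simp [sub_eq_iff_eq_add, add_comm]
  rfl

end Aux

/-- **Block-exponential computation (core of Theorem 1).** If `T` is an invertible
`p×p` real matrix, `u ∈ ℝᵖ`, and `S = [[0, 0ᵀ],[u, T]]` is the `(1+p)×(1+p)` block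
matrix, then for every `t ∈ ℝ` the vector `exp(t S) e₁` has first component `1` and
remaining components `T⁻¹ (exp(t T) − I) u`. -/
theorem block_exp_e1 (p : ℕ) (hp : 0 < p)
    (T : Matrix (Fin p) (Fin p) ℝ) (hT : IsUnit T.det)
    (u : Fin p → ℝ)
    (S : Matrix (Fin (p + 1)) (Fin (p + 1)) ℝ)
    (hSrow : ∀ j : Fin (p + 1), S 0 j = 0)
    (hScol : ∀ i : Fin p, S i.succ 0 = u i)
    (hSblock : ∀ i j : Fin p, S i.succ j.succ = T i j) :
    ∀ t : ℝ,
      (NormedSpace.exp (t • S)).mulVec (Pi.single (0 : Fin (p + 1)) 1) 0 = 1 ∧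
      ∀ i : Fin p,
        (NormedSpace.exp (t • S)).mulVec (Pi.single (0 : Fin (p + 1)) 1) i.succ =
          ((T⁻¹ * (NormedSpace.exp (t • T) - 1)).mulVec u) i := by
  -- powers of S
  have hrow : ∀ (n : ℕ) (j : Fin (p + 1)), (S ^ (n + 1)) 0 j = 0 := by
    intro n j
    rw [pow_succ']
    simp [Matrix.mul_apply, hSrow]
  have hblock : ∀ (n : ℕ) (i j : Fin p), (S ^ n) i.succ j.succ = (T ^ n) i j := by
    intro n
    induction n with
    | zero =>
      intro i j
      simp only [pow_zero, Matrix.one_apply]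
      by_cases h : i = j <;> simp [h, Fin.succ_inj]
    | succ n ih =>
      intro i j
      rw [pow_succ, pow_succ, Matrix.mul_apply, Matrix.mul_apply, Fin.sum_univ_succ]
      have h1 : S 0 j.succ = 0 := hSrow j.succ
      simp [h1, ih, hSblock]
  have hcol : ∀ (n : ℕ) (i : Fin p), (S ^ (n + 1)) i.succ 0 = ((T ^ n).mulVec u) i := by
    intro n i
    rw [pow_succ, Matrix.mul_apply, Fin.sum_univ_succ]
    have h0 : S 0 0 = 0 := hSrow 0
    simp [h0, hblock, hScol, Matrix.mulVec, dotProduct]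
  intro t
  letI : SeminormedRing (Matrix (Fin p) (Fin p) ℝ) := Matrix.linftyOpSemiNormedRing
  letI : NormedRing (Matrix (Fin p) (Fin p) ℝ) := Matrix.linftyOpNormedRing
  letI : NormedAlgebra ℝ (Matrix (Fin p) (Fin p) ℝ) := Matrix.linftyOpNormedAlgebra
  have hTp : ∀ n : ℕ, T⁻¹ * T ^ (n + 1) = T ^ n := by
    intro n
    rw [pow_succ', ← Matrix.mul_assoc, Matrix.nonsing_inv_mul T hT, Matrix.one_mul]
  constructor
  · -- first component
    simp only [Matrix.mulVec_single_one, Matrix.col_apply]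
    rw [exp_entry]
    rw [tsum_eq_single 0]
    · simp
    · intro n hn
      obtain ⟨m, rfl⟩ := Nat.exists_eq_succ_of_ne_zero hn
      have : ((t • S) ^ (m + 1)) 0 0 = 0 := by
        rw [smul_pow]
        simp [hrow m 0]
      simp [this]
  · -- remaining components
    intro i
    simp only [Matrix.mulVec_single_one, Matrix.col_apply]
    rw [exp_entry]
    have hsum := exp_entry_summable (p + 1) (t • S) i.succ 0
    rw [Summable.tsum_eq_zero_add hsum]
    have hz : (((0:ℕ)! : ℝ)⁻¹ • (t • S) ^ 0) i.succ 0 = 0 := by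
      simp [Matrix.one_apply, Fin.succ_ne_zero]
    rw [hz, zero_add]
    -- RHS
    have hmat : T⁻¹ * (NormedSpace.exp (t • T) - 1)
        = ∑' (n : ℕ), (((n + 1)! : ℝ)⁻¹ * t ^ (n + 1)) • T ^ n := by
      rw [exp_sub_one_eq]
      have hsumT : Summable (fun n : ℕ => (((n + 1)! : ℝ)⁻¹ • (t • T) ^ (n + 1))) :=
        (NormedSpace.expSeries_summable' (𝕂 := ℝ) (t • T)).comp_injective
          (add_left_injective 1)
      rw [← (hsumT.hasSum.mul_left T⁻¹).tsum_eq]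
      refine tsum_congr fun n => ?_
      rw [Matrix.mul_smul, smul_pow, Matrix.mul_smul, hTp, smul_smul]
    rw [hmat]
    -- mulVec of a tsum, at component i : continuous linear map M ↦ (M.mulVec u) i
    have hsumT2 : Summable (fun n : ℕ => (((n + 1)! : ℝ)⁻¹ * t ^ (n + 1)) • T ^ n) := by
      have hsumT : Summable (fun n : ℕ => (((n + 1)! : ℝ)⁻¹ • (t • T) ^ (n + 1))) :=
        (NormedSpace.expSeries_summable' (𝕂 := ℝ) (t • T)).comp_injective
          (add_left_injective 1)
      refine (hsumT.mul_left T⁻¹).congr fun n => ?_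
      rw [Matrix.mul_smul, smul_pow, Matrix.mul_smul, hTp, smul_smul]
    let L : Matrix (Fin p) (Fin p) ℝ →ₗ[ℝ] ℝ :=
      { toFun := fun M => (M.mulVec u) i
        map_add' := fun A B => by simp [Matrix.add_mulVec]
        map_smul' := fun c A => by
          simp [Matrix.smul_mulVec] }
    have hL := (LinearMap.toContinuousLinearMap L).map_tsum hsumT2
    have hLapp : ∀ M, LinearMap.toContinuousLinearMap L M = (M.mulVec u) i := fun _ => rfl
    rw [show ((∑' (n : ℕ), (((n + 1)! : ℝ)⁻¹ * t ^ (n + 1)) • T ^ n).mulVec u) i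
        = LinearMap.toContinuousLinearMap L
          (∑' (n : ℕ), (((n + 1)! : ℝ)⁻¹ * t ^ (n + 1)) • T ^ n) from rfl, hL]
    refine tsum_congr fun n => ?_
    rw [hLapp]
    rw [smul_pow]
    have := hcol n i
    simp only [Matrix.smul_apply, smul_eq_mul, this]
    rw [Matrix.smul_mulVec]
    simp [mul_comm, mul_assoc, mul_left_comm]
end

section
/- Let n, k, m be positive integers with m ≥ 2, A an n×n real matrix, R a k×n real matrix with R Rᵀ = I_k, P := Rᵀ R, and assume P A = A. Set A_s := R A Rᵀ. Let b ∈ ℝⁿ with b ≠ 0 and R b = 0, set b_s := R A b and assume b_s ≠ 0. Let W be a k×(m−1) real matrix with orthonormal columns (Wᵀ W = I_{m−1}) whose first column is b_s/‖b_s‖, and suppose S̃ := Wᵀ A_s W is invertible. Define the n×m matrix V whose first column is b/‖b‖ and whose remaining columns are those of Rᵀ W, and set S := Vᵀ A V. Then for every t ∈ ℝ, the Krylov approximation satisfies ‖b‖ · V exp(t S) e₁ = b + Rᵀ ( ‖b_s‖ · W ( S̃⁻¹ (exp(t S̃) − I_{m−1}) e₁ ) ), where e₁ denotes the first standard basis vector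 of the appropriate dimension. -/
set_option maxHeartbeats 1000000

open Matrix

/-- The Euclidean norm of a vector. -/
noncomputable def euclNorm {ι : Type*} [Fintype ι] (v : ι → ℝ) : ℝ :=
  Real.sqrt (∑ i, v i ^ 2)

lemma euclNorm_pos {ι : Type*} [Fintype ι] {v : ι → ℝ} (hv : v ≠ 0) : 0 < euclNorm v := by
  refine Real.sqrt_pos.mpr ?_
  obtain ⟨i, hi⟩ := Function.ne_iff.mp hv
  exact Finset.sum_pos' (fun j _ => sq_nonneg _)
    ⟨i, Finset.mem_univ _, lt_of_le_of_ne (sq_nonneg _) (Ne.symm (pow_ne_zero 2 hi))⟩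

lemma hasSum_exp_mulVec {m : ℕ} (M : Matrix (Fin m) (Fin m) ℝ) (v : Fin m → ℝ) :
    HasSum (fun nn : ℕ => (Nat.factorial nn : ℝ)⁻¹ • ((M ^ nn).mulVec v))
      ((NormedSpace.exp M).mulVec v) := by
  letI : SeminormedRing (Matrix (Fin m) (Fin m) ℝ) := Matrix.linftyOpSemiNormedRing
  letI : NormedRing (Matrix (Fin m) (Fin m) ℝ) := Matrix.linftyOpNormedRing
  letI : NormedAlgebra ℝ (Matrix (Fin m) (Fin m) ℝ) := Matrix.linftyOpNormedAlgebra
  have hs : HasSum (fun nn : ℕ => (Nat.factorial nn : ℝ)⁻¹ • M ^ nn) (NormedSpace.exp M) := by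
    rw [NormedSpace.exp_eq_tsum (𝕂 := ℝ)]
    exact (NormedSpace.expSeries_summable' (𝕂 := ℝ) M).hasSum
  have hcont : Continuous fun N : Matrix (Fin m) (Fin m) ℝ => N.mulVec v := by
    refine continuous_pi fun i => ?_
    simp only [Matrix.mulVec, dotProduct]
    exact continuous_finset_sum _ fun j _ =>
      ((continuous_id.matrix_elem i j).mul continuous_const)
  let F : Matrix (Fin m) (Fin m) ℝ →+ (Fin m → ℝ) :=
    AddMonoidHom.mk' (fun N => N.mulVec v) (fun N N' => Matrix.add_mulVec N N' v)
  have := hs.map F hcont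
  simp only [F, AddMonoidHom.mk'_apply] at this
  convert this using 1
  funext nn
  simp [Function.comp, Matrix.smul_mulVec]

lemma hasSum_matrix_mulVec {m l : ℕ} {f : ℕ → (Fin l → ℝ)} {x : Fin l → ℝ}
    (h : HasSum f x) (M : Matrix (Fin m) (Fin l) ℝ) :
    HasSum (fun nn => M.mulVec (f nn)) (M.mulVec x) := by
  have hcont : Continuous fun w : Fin l → ℝ => M.mulVec w :=
    LinearMap.continuous_of_finiteDimensional (M.mulVecLin)
  let F : (Fin l → ℝ) →+ (Fin m → ℝ) :=
    AddMonoidHom.mk' (fun w => M.mulVec w) (fun w w' => Matrix.mulVec_add M w w')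
  exact h.map F hcont

lemma hasSum_cons_zero {p : ℕ} {f : ℕ → (Fin p → ℝ)} {x : Fin p → ℝ} (h : HasSum f x) :
    HasSum (fun nn => (Fin.cons 0 (f nn) : Fin (p + 1) → ℝ)) (Fin.cons 0 x) := by
  have hadd : ∀ w w' : Fin p → ℝ,
      (Fin.cons 0 (w + w') : Fin (p + 1) → ℝ) = Fin.cons 0 w + Fin.cons 0 w' := by
    intro w w'
    funext i
    induction i using Fin.cases with
    | zero => simp
    | succ i => simp
  have hcont : Continuous fun w : Fin p → ℝ => (Fin.cons 0 w : Fin (p + 1) → ℝ) := by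
    refine continuous_pi fun i => ?_
    induction i using Fin.cases with
    | zero => simpa using continuous_const
    | succ i => simpa using continuous_apply i
  let F : (Fin p → ℝ) →+ (Fin (p + 1) → ℝ) :=
    AddMonoidHom.mk' (fun w => (Fin.cons 0 w : Fin (p + 1) → ℝ)) hadd
  exact h.map F hcont

lemma cons_zero_smul {p : ℕ} (a : ℝ) (w : Fin p → ℝ) :
    (Fin.cons 0 (a • w) : Fin (p + 1) → ℝ) = a • (Fin.cons 0 w : Fin (p + 1) → ℝ) := by
  funext i
  induction i using Fin.cases with
  | zero => simp
  | succ i => simp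

/-- **Theorem 1 (Kryapproxext).** Here `m = p + 1` with `p ≥ 1` (i.e. `m ≥ 2`).
With `R Rᵀ = I`, `P A = A` (`P = Rᵀ R`), `A_s = R A Rᵀ`, `b ≠ 0`, `R b = 0`,
`b_s = R A b ≠ 0`, `W` a `k×p` matrix with orthonormal columns and first column
`b_s/‖b_s‖`, `S̃ = Wᵀ A_s W` invertible, `V = [b/‖b‖ | Rᵀ W]` and `S = Vᵀ A V`,
the Krylov approximation satisfies
`‖b‖ V exp(t S) e₁ = b + Rᵀ (‖b_s‖ W (S̃⁻¹ (exp(t S̃) − I) e₁))` for every `t`. -/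
theorem Kryapproxext (n k p : ℕ) (hn : 0 < n) (hk : 0 < k) (hp : 1 ≤ p)
    (A : Matrix (Fin n) (Fin n) ℝ) (R : Matrix (Fin k) (Fin n) ℝ)
    (hR : R * Rᵀ = 1) (hPA : (Rᵀ * R) * A = A)
    (b : Fin n → ℝ) (hb : b ≠ 0) (hRb : R.mulVec b = 0)
    (hbs : R.mulVec (A.mulVec b) ≠ 0)
    (W : Matrix (Fin k) (Fin p) ℝ) (hW : Wᵀ * W = 1)
    (hWcol : ∀ i, W i ⟨0, hp⟩ = R.mulVec (A.mulVec b) i / euclNorm (R.mulVec (A.mulVec b)))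
    (hStilde : IsUnit (Wᵀ * (R * A * Rᵀ) * W).det)
    (V : Matrix (Fin n) (Fin (p + 1)) ℝ)
    (hVcol0 : ∀ i, V i 0 = b i / euclNorm b)
    (hVcols : ∀ i (j : Fin p), V i j.succ = (Rᵀ * W) i j) :
    ∀ t : ℝ,
      euclNorm b •
          V.mulVec ((NormedSpace.exp (t • (Vᵀ * A * V))).mulVec
            (Pi.single (0 : Fin (p + 1)) 1)) =
        b + Rᵀ.mulVec
          (euclNorm (R.mulVec (A.mulVec b)) •
            W.mulVec
              (((Wᵀ * (R * A * Rᵀ) * W)⁻¹ *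
                  (NormedSpace.exp (t • (Wᵀ * (R * A * Rᵀ) * W)) - 1)).mulVec
                (Pi.single (⟨0, hp⟩ : Fin p) 1))) := by
  intro t
  classical
  set S : Matrix (Fin (p + 1)) (Fin (p + 1)) ℝ := Vᵀ * A * V with hSdef
  set T : Matrix (Fin p) (Fin p) ℝ := Wᵀ * (R * A * Rᵀ) * W with hTdef
  set bs : Fin k → ℝ := R.mulVec (A.mulVec b) with hbsdef
  set β : ℝ := euclNorm b with hβdef
  set βs : ℝ := euclNorm bs with hβsdef
  have hβ : 0 < β := euclNorm_pos hb
  have hβs : 0 < βs := euclNorm_pos hbs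
  set e0 : Fin (p + 1) → ℝ := Pi.single (0 : Fin (p + 1)) 1 with he0
  set f0 : Fin p → ℝ := Pi.single (⟨0, hp⟩ : Fin p) 1 with hf0
  set c : ℝ := β⁻¹ * βs with hcdef
  -- b_s in terms of the first column of W
  have hbsW : bs = βs • fun i => W i ⟨0, hp⟩ := by
    funext i
    rw [Pi.smul_apply, hWcol i, smul_eq_mul]
    field_simp
  -- column 0 of V
  have hcol0 : (fun i => V i (0 : Fin (p + 1))) = β⁻¹ • b := by
    funext i
    rw [hVcol0 i, Pi.smul_apply, smul_eq_mul, div_eq_inv_mul, hβdef]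
  -- b is orthogonal to the range of A
  have hbA : ∀ x : Fin n → ℝ, b ⬝ᵥ A.mulVec x = 0 := by
    intro x
    conv_lhs => rw [← hPA]
    rw [Matrix.mul_assoc, ← Matrix.mulVec_mulVec, Matrix.dotProduct_mulVec,
      Matrix.vecMul_transpose, hRb]
    simp
  -- entries of S
  have hSentry : ∀ i j, S i j = (fun a => V a i) ⬝ᵥ A.mulVec (fun a => V a j) := by
    intro i j
    rw [hSdef, Matrix.mul_assoc]
    simp [Matrix.mul_apply, Matrix.mulVec, dotProduct, Matrix.transpose_apply]
  have hrow0 : ∀ j, S (0 : Fin (p + 1)) j = 0 := by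
    intro j
    rw [hSentry]
    have h1 : (fun a => V a (0 : Fin (p + 1))) = β⁻¹ • b := hcol0
    rw [h1, smul_dotProduct, hbA, smul_zero]
  -- the key vector identity : (Rᵀ W)ᵀ (A b) = βs • f0
  have hu : (Rᵀ * W)ᵀ.mulVec (A.mulVec b) = βs • f0 := by
    have hW0 : (fun i => W i ⟨0, hp⟩) = W.mulVec f0 := by
      funext i
      simp [hf0]
    rw [Matrix.transpose_mul, Matrix.transpose_transpose, ← Matrix.mulVec_mulVec, ← hbsdef,
      hbsW, hW0, Matrix.mulVec_smul, Matrix.mulVec_mulVec, hW, Matrix.one_mulVec]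
  have hcol_succ : ∀ i : Fin p, S i.succ (0 : Fin (p + 1)) = c * f0 i := by
    intro i
    rw [hSentry, hcol0, Matrix.mulVec_smul, dotProduct_smul]
    have h2 : (fun a => V a i.succ) ⬝ᵥ A.mulVec b = ((Rᵀ * W)ᵀ.mulVec (A.mulVec b)) i := by
      simp only [Matrix.mulVec, dotProduct, Matrix.transpose_apply, hVcols]
    rw [h2, hu, Pi.smul_apply, smul_eq_mul, smul_eq_mul, hcdef]
    ring
  have hblock : ∀ i j : Fin p, S i.succ j.succ = T i j := by
    intro i j
    have hAV : (A.mulVec fun a' => V a' j.succ) = fun a => (A * (Rᵀ * W)) a j := by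
      funext a
      simp only [Matrix.mulVec, dotProduct, Matrix.mul_apply, hVcols]
    have hTalt : T = (Rᵀ * W)ᵀ * (A * (Rᵀ * W)) := by
      rw [hTdef, Matrix.transpose_mul, Matrix.transpose_transpose]
      simp only [Matrix.mul_assoc]
    rw [hSentry, hTalt, hAV]
    simp only [Matrix.mul_apply, dotProduct, Matrix.transpose_apply, hVcols]
  -- action of S on e0 and on extended vectors
  have hSe0 : S.mulVec e0 = c • (Fin.cons 0 f0 : Fin (p + 1) → ℝ) := by
    funext i
    induction i using Fin.cases with
    | zero => simp [he0, hrow0]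
    | succ i => simp [he0, hcol_succ i]
  have hScons : ∀ w : Fin p → ℝ,
      S.mulVec (Fin.cons 0 w) = (Fin.cons 0 (T.mulVec w) : Fin (p + 1) → ℝ) := by
    intro w
    funext i
    induction i using Fin.cases with
    | zero => simp [Matrix.mulVec, dotProduct, Fin.sum_univ_succ, hrow0]
    | succ i =>
      simp only [Matrix.mulVec, dotProduct, Fin.sum_univ_succ, Fin.cons_zero,
        Fin.cons_succ, mul_zero, zero_add, hblock]
  -- powers of S acting on e0
  have hpow : ∀ nn : ℕ, (S ^ (nn + 1)).mulVec e0 =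
      c • (Fin.cons 0 ((T ^ nn).mulVec f0) : Fin (p + 1) → ℝ) := by
    intro nn
    induction nn with
    | zero => simp [hSe0]
    | succ nn ih =>
      rw [pow_succ', ← Matrix.mulVec_mulVec, ih, Matrix.mulVec_smul, hScons,
        Matrix.mulVec_mulVec, ← pow_succ']
  -- the exponential series
  have h1 : HasSum
      (fun nn : ℕ => ((Nat.factorial nn : ℝ)⁻¹ * t ^ nn) • ((S ^ nn).mulVec e0))
      ((NormedSpace.exp (t • S)).mulVec e0) := by
    have := hasSum_exp_mulVec (t • S) e0
    convert this using 2 with nn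
    rw [smul_pow, Matrix.smul_mulVec, smul_smul]
  have h2 : HasSum
      (fun nn : ℕ => ((Nat.factorial nn : ℝ)⁻¹ * t ^ nn) • ((T ^ nn).mulVec f0))
      ((NormedSpace.exp (t • T)).mulVec f0) := by
    have := hasSum_exp_mulVec (t • T) f0
    convert this using 2 with nn
    rw [smul_pow, Matrix.smul_mulVec, smul_smul]
  set g : ℕ → (Fin p → ℝ) :=
    fun nn => ((Nat.factorial nn : ℝ)⁻¹ * t ^ nn) • ((T ^ nn).mulVec f0) with hgdef
  set q : ℕ → (Fin p → ℝ) :=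
    fun nn => ((Nat.factorial (nn + 1) : ℝ)⁻¹ * t ^ (nn + 1)) • ((T ^ nn).mulVec f0) with hqdef
  have hTinv : T⁻¹ * T = 1 := Matrix.nonsing_inv_mul T hStilde
  have hTq : ∀ nn, T.mulVec (q nn) = g (nn + 1) := by
    intro nn
    rw [hqdef, hgdef]
    simp only
    rw [Matrix.mulVec_smul, Matrix.mulVec_mulVec, ← pow_succ']
  have hqT : ∀ nn, q nn = T⁻¹.mulVec (g (nn + 1)) := by
    intro nn
    rw [← hTq nn, Matrix.mulVec_mulVec, hTinv, Matrix.one_mulVec]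
  have hgshift : Summable fun nn => g (nn + 1) := by
    have := ((summable_nat_add_iff 1).mpr h2.summable)
    exact this
  have hqsum : Summable q := by
    have h := hasSum_matrix_mulVec hgshift.hasSum T⁻¹
    refine ⟨T⁻¹.mulVec (∑' nn, g (nn + 1)), ?_⟩
    convert h using 1
    funext nn
    exact hqT nn
  set X : Fin p → ℝ := ∑' nn, q nn with hXdef
  have hX : HasSum q X := hqsum.hasSum
  -- identify X with the right-hand side inner vector
  have hTX : T.mulVec X = (NormedSpace.exp (t • T)).mulVec f0 - f0 := by
    have hmap : HasSum (fun nn => g (nn + 1)) (T.mulVec X) := by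
      have h := hasSum_matrix_mulVec hX T
      convert h using 1
      funext nn
      exact (hTq nn).symm
    have hg0 : g 0 = f0 := by
      simp [hgdef, Matrix.one_mulVec]
    have hshift : HasSum (fun nn => g (nn + 1))
        ((NormedSpace.exp (t • T)).mulVec f0 - f0) := by
      refine (hasSum_nat_add_iff (f := g) 1).mpr ?_
      simpa [hg0] using h2
    exact hmap.unique hshift
  have hinner : ((T⁻¹ * (NormedSpace.exp (t • T) - 1)).mulVec f0) = X := by
    rw [← Matrix.mulVec_mulVec, Matrix.sub_mulVec, Matrix.one_mulVec, ← hTX,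
      Matrix.mulVec_mulVec, hTinv, Matrix.one_mulVec]
  -- identify the left-hand side exponential action
  have hexpS : (NormedSpace.exp (t • S)).mulVec e0 =
      c • (Fin.cons 0 X : Fin (p + 1) → ℝ) + e0 := by
    have hterm : ∀ nn : ℕ,
        ((Nat.factorial (nn + 1) : ℝ)⁻¹ * t ^ (nn + 1)) • ((S ^ (nn + 1)).mulVec e0) =
          c • (Fin.cons 0 (q nn) : Fin (p + 1) → ℝ) := by
      intro nn
      rw [hpow nn, hqdef]
      simp only
      rw [cons_zero_smul]
      exact smul_comm _ _ _
    have hmap : HasSum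
        (fun nn => ((Nat.factorial (nn + 1) : ℝ)⁻¹ * t ^ (nn + 1)) • ((S ^ (nn + 1)).mulVec e0))
        (c • (Fin.cons 0 X : Fin (p + 1) → ℝ)) := by
      have h := (hasSum_cons_zero hX).const_smul c
      convert h using 1
      funext nn
      exact hterm nn
    have ha0 : ((Nat.factorial 0 : ℝ)⁻¹ * t ^ 0) • ((S ^ 0).mulVec e0) = e0 := by
      simp [Matrix.one_mulVec]
    have := (hasSum_nat_add_iff
      (f := fun nn : ℕ => ((Nat.factorial nn : ℝ)⁻¹ * t ^ nn) • ((S ^ nn).mulVec e0)) 1).mp hmap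
    simp only [Finset.range_one, Finset.sum_singleton, ha0] at this
    exact h1.unique this
  -- final assembly
  rw [hinner, hexpS]
  have hVe0 : V.mulVec e0 = β⁻¹ • b := by
    rw [he0, Matrix.mulVec_single]
    funext i
    simpa using congrFun hcol0 i
  have hVcons : V.mulVec (Fin.cons 0 X) = (Rᵀ * W).mulVec X := by
    funext i
    simp [Matrix.mulVec, dotProduct, Fin.sum_univ_succ, hVcols]
  rw [Matrix.mulVec_add, Matrix.mulVec_smul, hVcons, hVe0, ← Matrix.mulVec_mulVec,
    Matrix.mulVec_smul, smul_add, smul_smul, smul_smul, hcdef]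
  rw [mul_inv_cancel₀ hβ.ne', one_smul]
  rw [show β * (β⁻¹ * βs) = βs by field_simp]
  exact add_comm _ b
end

section
/- Let q ≥ 1, let M be a q×q real symmetric matrix all of whose eigenvalues are negative, let γ > 0, let d be a natural number, let p be a real polynomial, and let C ≥ 0 be such that |(eᶻ − 1)/z − p(z)/(γ − z)^d| ≤ C for all z < 0. Then γ I_q − M is invertible and for every v ∈ ℝ^q, ‖ ( M⁻¹(exp(M) − I_q) − p(M) ((γ I_q − M)⁻¹)^d ) v ‖ ≤ C ‖v‖, where ‖·‖ is the Euclidean norm. -/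
open Matrix

/-- The Euclidean norm of a vector. -/
noncomputable def euclidNorm {ι : Type*} [Fintype ι] (v : ι → ℝ) : ℝ :=
  Real.sqrt (∑ i, v i ^ 2)

namespace SpecAux

variable {q : ℕ} {U : Matrix (Fin q) (Fin q) ℝ}

/-- Conjugation of a diagonal matrix by `U`. -/
noncomputable def cg (U : Matrix (Fin q) (Fin q) ℝ) (g : Fin q → ℝ) :
    Matrix (Fin q) (Fin q) ℝ := U * Matrix.diagonal g * star U

theorem cg_mul (hU : star U * U = 1) (g h : Fin q → ℝ) :
    cg U g * cg U h = cg U (g * h) := by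
  unfold cg
  rw [show g * h = fun i => g i * h i from rfl, ← diagonal_mul_diagonal]
  simp only [Matrix.mul_assoc]
  rw [← Matrix.mul_assoc (star U) U, hU, one_mul]

theorem cg_one (hU' : U * star U = 1) : cg U (1 : Fin q → ℝ) = 1 := by
  unfold cg
  have h1 : Matrix.diagonal (1 : Fin q → ℝ) = 1 := Matrix.diagonal_one
  rw [h1, mul_one, hU']

theorem cg_add (g h : Fin q → ℝ) : cg U (g + h) = cg U g + cg U h := by
  unfold cg
  rw [show g + h = fun i => g i + h i from rfl, ← diagonal_add, mul_add, add_mul]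

theorem cg_sub (g h : Fin q → ℝ) : cg U (g - h) = cg U g - cg U h := by
  unfold cg
  rw [show g - h = fun i => g i - h i from rfl, ← diagonal_sub, mul_sub, sub_mul]

theorem cg_smul (a : ℝ) (g : Fin q → ℝ) : cg U (a • g) = a • cg U g := by
  unfold cg; rw [diagonal_smul, mul_smul_comm, smul_mul_assoc]

theorem cg_pow (hU : star U * U = 1) (hU' : U * star U = 1) (g : Fin q → ℝ) (n : ℕ) :
    cg U (g ^ n) = cg U g ^ n := by
  induction n with
  | zero => simpa using cg_one hU'
  | succ n ih => rw [pow_succ, pow_succ, ← ih, cg_mul hU]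

theorem cg_inv (hU : star U * U = 1) (hU' : U * star U = 1) (g : Fin q → ℝ)
    (hg : ∀ i, g i ≠ 0) : (cg U g)⁻¹ = cg U g⁻¹ := by
  apply Matrix.inv_eq_right_inv
  rw [cg_mul hU]
  have : g * g⁻¹ = 1 := funext fun i => mul_inv_cancel₀ (hg i)
  rw [this, cg_one hU']

theorem cg_exp (hU' : U * star U = 1) (g : Fin q → ℝ) :
    NormedSpace.exp (cg U g) = cg U (fun i => Real.exp (g i)) := by
  have hinv : U⁻¹ = star U := Matrix.inv_eq_right_inv hU'
  have hunit : IsUnit U := Matrix.isUnit_iff_isUnit_det U |>.mpr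
    (Matrix.isUnit_det_of_right_inverse hU')
  unfold cg
  rw [← hinv, Matrix.exp_conj U _ hunit, Matrix.exp_diagonal]
  congr 1
  rw [Pi.exp_def]
  funext i
  rw [← Real.exp_eq_exp_ℝ]

theorem cg_aeval (hU : star U * U = 1) (hU' : U * star U = 1) (v : Fin q → ℝ)
    (p : Polynomial ℝ) :
    Polynomial.aeval (cg U v) p = cg U (fun i => p.eval (v i)) := by
  induction p using Polynomial.induction_on with
  | C a =>
      simp only [Polynomial.aeval_C, Polynomial.eval_C]
      have h : (fun _ : Fin q => a) = a • (1 : Fin q → ℝ) := by funext i; simp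
      rw [h, cg_smul, cg_one hU', Algebra.algebraMap_eq_smul_one]
  | add f g hf hg =>
      have h : (fun i => Polynomial.eval (v i) (f + g)) =
          (fun i => Polynomial.eval (v i) f) + fun i => Polynomial.eval (v i) g := by
        funext i; simp
      rw [map_add, hf, hg, h, cg_add]
  | monomial n a ih =>
      rw [_root_.map_mul, Polynomial.aeval_C, map_pow, Polynomial.aeval_X,
        ← cg_pow hU hU', Algebra.algebraMap_eq_smul_one, smul_mul_assoc, one_mul,
        ← cg_smul]
      have h : a • v ^ (n + 1) = fun i => Polynomial.eval (v i) (Polynomial.C a * Polynomial.X ^ (n + 1)) := by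
        funext i; simp
      rw [h]



theorem enorm_mulVec (hU : star U * U = 1) (v : Fin q → ℝ) :
    euclidNorm (U *ᵥ v) = euclidNorm v := by
  have hUT : Uᵀ * U = 1 := by
    rwa [Matrix.star_eq_conjTranspose, Matrix.conjTranspose_eq_transpose_of_trivial] at hU
  unfold euclidNorm
  congr 1
  have h1 : ∀ w : Fin q → ℝ, ∑ i, w i ^ 2 = w ⬝ᵥ w := by
    intro w; simp [dotProduct, sq]
  rw [h1 (U *ᵥ v), h1 v, Matrix.dotProduct_mulVec, ← Matrix.mulVec_transpose,
    Matrix.mulVec_mulVec, hUT, Matrix.one_mulVec]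

theorem enorm_diagonal_mulVec_le {C : ℝ} (hC : 0 ≤ C) (g v : Fin q → ℝ)
    (hg : ∀ i, |g i| ≤ C) : euclidNorm (Matrix.diagonal g *ᵥ v) ≤ C * euclidNorm v := by
  unfold euclidNorm
  rw [← Real.sqrt_sq hC, ← Real.sqrt_mul (by positivity)]
  apply Real.sqrt_le_sqrt
  rw [Finset.mul_sum]
  apply Finset.sum_le_sum
  intro i _
  rw [Matrix.mulVec_diagonal, mul_pow]
  have h2 : g i ^ 2 ≤ C ^ 2 := by
    rw [← sq_abs]
    exact pow_le_pow_left₀ (abs_nonneg _) (hg i) 2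
  exact mul_le_mul_of_nonneg_right h2 (sq_nonneg _)

end SpecAux

/-- **Spectral sup-norm bound on `(−∞,0)` for symmetric matrices.** If `M` is a `q×q`
real symmetric matrix with all eigenvalues negative, `γ > 0`, and the rational function
`p(z)/(γ − z)^d` approximates `φ₁(z) = (eᶻ − 1)/z` within `C` on `(−∞, 0)`, then
`γ I − M` is invertible and
`‖(M⁻¹(exp M − I) − p(M)((γ I − M)⁻¹)^d) v‖ ≤ C ‖v‖` for every `v`. -/
theorem spectral_sup_norm_bound (q : ℕ) (hq : 0 < q)
    (M : Matrix (Fin q) (Fin q) ℝ) (hM : M.IsHermitian)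
    (heig : ∀ i, hM.eigenvalues i < 0)
    (γ : ℝ) (hγ : 0 < γ) (d : ℕ) (p : Polynomial ℝ)
    (C : ℝ) (hC : 0 ≤ C)
    (hbound : ∀ z : ℝ, z < 0 →
      |(Real.exp z - 1) / z - p.eval z / (γ - z) ^ d| ≤ C) :
    IsUnit (γ • (1 : Matrix (Fin q) (Fin q) ℝ) - M).det ∧
    ∀ v : Fin q → ℝ,
      euclidNorm
        ((M⁻¹ * (NormedSpace.exp M - 1) -
            Polynomial.aeval M p *
              ((γ • (1 : Matrix (Fin q) (Fin q) ℝ) - M)⁻¹) ^ d).mulVec v) ≤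
        C * euclidNorm v := by
  classical
  obtain ⟨U, hU, hU', hMeq⟩ :
      ∃ U : Matrix (Fin q) (Fin q) ℝ, star U * U = 1 ∧ U * star U = 1 ∧
        M = SpecAux.cg U hM.eigenvalues := by
    refine ⟨(Matrix.IsHermitian.eigenvectorUnitary hM : Matrix (Fin q) (Fin q) ℝ),
      (Matrix.IsHermitian.eigenvectorUnitary hM).prop.1,
      (Matrix.IsHermitian.eigenvectorUnitary hM).prop.2, ?_⟩
    have h := hM.spectral_theorem
    rwa [RCLike.ofReal_real_eq_id, Function.id_comp] at h
  set lam := hM.eigenvalues with hlamdef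
  have hlne : ∀ i, lam i ≠ 0 := fun i => ne_of_lt (heig i)
  have hgne : ∀ i, γ - lam i ≠ 0 := fun i => ne_of_gt (by have := heig i; linarith)
  have hgI : γ • (1 : Matrix (Fin q) (Fin q) ℝ) - M = SpecAux.cg U (fun i => γ - lam i) := by
    have h : (fun i => γ - lam i) = γ • (1 : Fin q → ℝ) - lam := by funext i; simp
    rw [h, SpecAux.cg_sub, SpecAux.cg_smul, SpecAux.cg_one hU', hMeq]
  have hginv : (fun i => γ - lam i) * (fun i => γ - lam i)⁻¹ = 1 :=
    funext fun i => mul_inv_cancel₀ (hgne i)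
  constructor
  · apply Matrix.isUnit_det_of_right_inverse (B := SpecAux.cg U (fun i => γ - lam i)⁻¹)
    rw [hgI, SpecAux.cg_mul hU, hginv, SpecAux.cg_one hU']
  · intro v
    set F : Fin q → ℝ :=
      fun i => (lam i)⁻¹ * (Real.exp (lam i) - 1) - p.eval (lam i) * ((γ - lam i)⁻¹) ^ d with hF
    have hexpr : M⁻¹ * (NormedSpace.exp M - 1) -
        Polynomial.aeval M p * ((γ • (1 : Matrix (Fin q) (Fin q) ℝ) - M)⁻¹) ^ d =
        SpecAux.cg U F := by
      rw [hgI, hMeq, SpecAux.cg_inv hU hU' _ hlne, SpecAux.cg_inv hU hU' _ hgne,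
        SpecAux.cg_exp hU', SpecAux.cg_aeval hU hU',
        show (1 : Matrix (Fin q) (Fin q) ℝ) = SpecAux.cg U 1 from (SpecAux.cg_one hU').symm,
        ← SpecAux.cg_sub, SpecAux.cg_mul hU, ← SpecAux.cg_pow hU hU', SpecAux.cg_mul hU,
        ← SpecAux.cg_sub]
      refine congrArg (SpecAux.cg U) ?_
      funext i
      simp [hF]
    rw [hexpr]
    have hmv : SpecAux.cg U F *ᵥ v = U *ᵥ (Matrix.diagonal F *ᵥ (star U *ᵥ v)) := by
      rw [Matrix.mulVec_mulVec, Matrix.mulVec_mulVec]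
      rfl
    rw [hmv, SpecAux.enorm_mulVec hU]
    have h3 : euclidNorm (star U *ᵥ v) = euclidNorm v :=
      SpecAux.enorm_mulVec (by rw [star_star]; exact hU') v
    have h2 : euclidNorm (Matrix.diagonal F *ᵥ (star U *ᵥ v)) ≤
        C * euclidNorm (star U *ᵥ v) := by
      apply SpecAux.enorm_diagonal_mulVec_le hC
      intro i
      have hb := hbound (lam i) (heig i)
      have hFi : F i = (Real.exp (lam i) - 1) / lam i - p.eval (lam i) / (γ - lam i) ^ d := by
        show (lam i)⁻¹ * (Real.exp (lam i) - 1) -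
            Polynomial.eval (lam i) p * (γ - lam i)⁻¹ ^ d = _
        rw [inv_mul_eq_div, inv_pow, ← div_eq_mul_inv]
      rw [hFi]
      exact hb
    rw [h3] at h2
    exact h2
end

section
/- Let n, k, m be positive integers with m ≥ 2, A an n×n real matrix, R a k×n real matrix with R Rᵀ = I_k, P := Rᵀ R, and assume P A = A. Set A_s := R A Rᵀ and suppose A_s is symmetric with all eigenvalues negative. Let b ∈ ℝⁿ with b ≠ 0 and R b = 0, set b_s := R A b and assume b_s ≠ 0. Let W be a k×(m−1) real matrix with orthonormal columns whose first column is b_s/‖b_s‖, and suppose S̃ := Wᵀ A_s W is symmetric with all eigenvalues negative. Fix t > 0 and γ > 0, and define the approximation f_m := b + Rᵀ( ‖b_s‖ · W ( S̃⁻¹ (exp(t S̃) − I_{m−1}) e₁ ) ). Assume the exactness property: for every real polynomial q with deg q ≤ m−2, q(t A_s) ((γ I_k − t A_s)⁻¹)^{m−2} b_s = ‖b_s‖ · W ( q(t S̃) ((γ I_{m−1} − t S̃)⁻¹)^{m−2} e₁ ). Then for every real polynomial p with deg p ≤ m−2 and every C ≥ 0 such that |(eᶻ − 1)/z − p(z)/(γ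 − z)^{m−2}| ≤ C for all z < 0, one has ‖ exp(t A) b − f_m ‖ ≤ 2 t C ‖b_s‖. -/
open Matrix

namespace KrylovAux

open NormedSpace
open scoped Nat

variable {ι κ : Type*} [Fintype ι] [Fintype κ]

lemma enorm_nonneg (v : ι → ℝ) : 0 ≤ euclNorm v := Real.sqrt_nonneg _

lemma enorm_eq_dotProduct (v : ι → ℝ) : euclNorm v = Real.sqrt (v ⬝ᵥ v) := by
  unfold euclNorm dotProduct
  congr 1
  exact Finset.sum_congr rfl fun i _ => sq (v i)

lemma enorm_smul {c : ℝ} (hc : 0 ≤ c) (v : ι → ℝ) : euclNorm (c • v) = c * euclNorm v := by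
  unfold euclNorm
  have h : ∑ i, (c • v) i ^ 2 = c ^ 2 * ∑ i, v i ^ 2 := by
    rw [Finset.mul_sum]
    exact Finset.sum_congr rfl fun i _ => by simp [mul_pow]
  rw [h, Real.sqrt_mul (by positivity), Real.sqrt_sq hc]

lemma enorm_eq_norm (v : ι → ℝ) : euclNorm v = ‖(WithLp.equiv 2 (ι → ℝ)).symm v‖ := by
  rw [EuclideanSpace.norm_eq]
  unfold euclNorm
  congr 1
  exact Finset.sum_congr rfl fun i _ => by simp [sq_abs]

lemma enorm_add_le (v w : ι → ℝ) : euclNorm (v + w) ≤ euclNorm v + euclNorm w := by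
  simp only [enorm_eq_norm]
  exact norm_add_le _ _

lemma enorm_mulVec_orth [DecidableEq κ] (Q : Matrix ι κ ℝ) (hQ : Qᵀ * Q = 1) (v : κ → ℝ) :
    euclNorm (Q *ᵥ v) = euclNorm v := by
  rw [enorm_eq_dotProduct, enorm_eq_dotProduct]
  congr 1
  calc (Q *ᵥ v) ⬝ᵥ (Q *ᵥ v) = ((Q *ᵥ v) ᵥ* Q) ⬝ᵥ v := dotProduct_mulVec _ _ _
    _ = (Qᵀ *ᵥ (Q *ᵥ v)) ⬝ᵥ v := by rw [mulVec_transpose]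
    _ = ((Qᵀ * Q) *ᵥ v) ⬝ᵥ v := by rw [mulVec_mulVec]
    _ = v ⬝ᵥ v := by rw [hQ, one_mulVec]

lemma enorm_diagonal_mulVec_le [DecidableEq ι] {d : ℝ} (hd : 0 ≤ d) (f : ι → ℝ)
    (hf : ∀ i, |f i| ≤ d) (v : ι → ℝ) :
    euclNorm ((diagonal f) *ᵥ v) ≤ d * euclNorm v := by
  unfold euclNorm
  calc Real.sqrt (∑ i, ((diagonal f) *ᵥ v) i ^ 2)
      ≤ Real.sqrt (d ^ 2 * ∑ i, v i ^ 2) := by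
        apply Real.sqrt_le_sqrt
        rw [Finset.mul_sum]
        apply Finset.sum_le_sum
        intro i _
        have h1 : ((diagonal f) *ᵥ v) i = f i * v i := by simp [mulVec_diagonal]
        rw [h1, mul_pow]
        have h2 := hf i
        nlinarith [sq_abs (f i), pow_le_pow_left₀ (abs_nonneg (f i)) h2 2, sq_nonneg (v i)]
    _ = d * Real.sqrt (∑ i, v i ^ 2) := by
        rw [Real.sqrt_mul (by positivity), Real.sqrt_sq hd]

lemma enorm_conj_mulVec_le [DecidableEq ι] {U : Matrix ι ι ℝ} (hUl : Uᵀ * U = 1)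
    (hUr : U * Uᵀ = 1) (f : ι → ℝ) {d : ℝ} (hd : 0 ≤ d) (hf : ∀ i, |f i| ≤ d) (v : ι → ℝ) :
    euclNorm ((U * diagonal f * Uᵀ) *ᵥ v) ≤ d * euclNorm v := by
  have h : (U * diagonal f * Uᵀ) *ᵥ v = U *ᵥ (diagonal f *ᵥ (Uᵀ *ᵥ v)) := by
    rw [mulVec_mulVec, mulVec_mulVec]
  rw [h, enorm_mulVec_orth U hUl]
  calc euclNorm (diagonal f *ᵥ (Uᵀ *ᵥ v)) ≤ d * euclNorm (Uᵀ *ᵥ v) :=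
        enorm_diagonal_mulVec_le hd f hf _
    _ = d * euclNorm v := by rw [enorm_mulVec_orth Uᵀ (by rw [transpose_transpose]; exact hUr)]

section conj

variable {d : ℕ} {U : Matrix (Fin d) (Fin d) ℝ}

lemma conj_mul (hUl : Uᵀ * U = 1) (D E : Matrix (Fin d) (Fin d) ℝ) :
    (U * D * Uᵀ) * (U * E * Uᵀ) = U * (D * E) * Uᵀ := by
  have : U * D * Uᵀ * (U * E * Uᵀ) = U * D * (Uᵀ * U) * E * Uᵀ := by
    simp only [Matrix.mul_assoc]
  rw [this, hUl, Matrix.mul_one]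
  simp only [Matrix.mul_assoc]

lemma conj_one (hUr : U * Uᵀ = 1) : U * (1 : Matrix (Fin d) (Fin d) ℝ) * Uᵀ = 1 := by
  rw [Matrix.mul_one, hUr]

lemma conj_pow (hUl : Uᵀ * U = 1) (hUr : U * Uᵀ = 1) (D : Matrix (Fin d) (Fin d) ℝ) (j : ℕ) :
    (U * D * Uᵀ) ^ j = U * D ^ j * Uᵀ := by
  induction j with
  | zero => simpa using (conj_one hUr).symm
  | succ j ih => rw [pow_succ, pow_succ, ih, conj_mul hUl]

lemma conj_sub (D E : Matrix (Fin d) (Fin d) ℝ) :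
    U * D * Uᵀ - U * E * Uᵀ = U * (D - E) * Uᵀ := by
  rw [Matrix.mul_sub, Matrix.sub_mul]

lemma conj_add (D E : Matrix (Fin d) (Fin d) ℝ) :
    U * D * Uᵀ + U * E * Uᵀ = U * (D + E) * Uᵀ := by
  rw [Matrix.mul_add, Matrix.add_mul]

lemma conj_smul (c : ℝ) (D : Matrix (Fin d) (Fin d) ℝ) :
    c • (U * D * Uᵀ) = U * (c • D) * Uᵀ := by
  rw [Matrix.mul_smul, Matrix.smul_mul]

lemma conj_inv (hUl : Uᵀ * U = 1) (hUr : U * Uᵀ = 1) {f : Fin d → ℝ} (hf : ∀ i, f i ≠ 0) :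
    (U * diagonal f * Uᵀ)⁻¹ = U * diagonal (fun i => (f i)⁻¹) * Uᵀ := by
  apply Matrix.inv_eq_left_inv
  rw [conj_mul hUl, diagonal_mul_diagonal]
  have : (fun i => (f i)⁻¹ * f i) = fun _ => (1 : ℝ) := by
    funext i
    exact inv_mul_cancel₀ (hf i)
  rw [this, ← diagonal_one]
  exact conj_one hUr

lemma conj_aeval (hUl : Uᵀ * U = 1) (hUr : U * Uᵀ = 1) (f : Fin d → ℝ) (q : Polynomial ℝ) :
    Polynomial.aeval (U * diagonal f * Uᵀ) q =
      U * diagonal (fun i => q.eval (f i)) * Uᵀ := by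
  induction q using Polynomial.induction_on' with
  | add r s hr hs =>
    rw [map_add, hr, hs, conj_add, diagonal_add]
    congr 2
    funext i
    simp
  | monomial j a =>
    rw [Polynomial.aeval_monomial, conj_pow hUl hUr, Algebra.algebraMap_eq_smul_one,
      smul_mul_assoc, Matrix.one_mul, conj_smul, diagonal_pow]
    congr 1
    congr 1
    ext i j'
    rcases eq_or_ne i j' with rfl | h
    · simp [Polynomial.eval_monomial]
    · simp [Matrix.diagonal_apply_ne _ h]

lemma isUnit_of (hUl : Uᵀ * U = 1) (hUr : U * Uᵀ = 1) : IsUnit U :=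
  ⟨⟨U, Uᵀ, hUr, hUl⟩, rfl⟩

lemma conj_exp (hUl : Uᵀ * U = 1) (hUr : U * Uᵀ = 1) (D : Matrix (Fin d) (Fin d) ℝ) :
    exp (U * D * Uᵀ) = U * exp D * Uᵀ := by
  have hinv : U⁻¹ = Uᵀ := Matrix.inv_eq_right_inv hUr
  rw [← hinv, Matrix.exp_conj U D (isUnit_of hUl hUr), hinv]

end conj

section tsum

lemma pow_mul_eq_mul_pow {d e : ℕ} {M : Matrix (Fin d) (Fin d) ℝ}
    {N : Matrix (Fin e) (Fin e) ℝ} {X : Matrix (Fin d) (Fin e) ℝ}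
    (h : M * X = X * N) (j : ℕ) : M ^ j * X = X * N ^ j := by
  induction j with
  | zero => simp
  | succ j ih =>
    rw [pow_succ, pow_succ, Matrix.mul_assoc, h, ← Matrix.mul_assoc, ih, Matrix.mul_assoc]

lemma exp_intertwine {d e : ℕ} (M : Matrix (Fin d) (Fin d) ℝ)
    (N : Matrix (Fin e) (Fin e) ℝ) (X : Matrix (Fin d) (Fin e) ℝ)
    (h : M * X = X * N) :
    exp M * X = X * exp N := by
  letI : SeminormedRing (Matrix (Fin d) (Fin d) ℝ) := Matrix.linftyOpSemiNormedRing
  letI : NormedRing (Matrix (Fin d) (Fin d) ℝ) := Matrix.linftyOpNormedRing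
  letI : NormedAlgebra ℝ (Matrix (Fin d) (Fin d) ℝ) := Matrix.linftyOpNormedAlgebra
  letI : SeminormedRing (Matrix (Fin e) (Fin e) ℝ) := Matrix.linftyOpSemiNormedRing
  letI : NormedRing (Matrix (Fin e) (Fin e) ℝ) := Matrix.linftyOpNormedRing
  letI : NormedAlgebra ℝ (Matrix (Fin e) (Fin e) ℝ) := Matrix.linftyOpNormedAlgebra
  have hsM : Summable (fun j : ℕ => (j ! : ℝ)⁻¹ • M ^ j) := expSeries_summable' M
  have hsN : Summable (fun j : ℕ => (j ! : ℝ)⁻¹ • N ^ j) := expSeries_summable' N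
  let L1 : Matrix (Fin d) (Fin d) ℝ →ₗ[ℝ] Matrix (Fin d) (Fin e) ℝ :=
    { toFun := fun Y => Y * X
      map_add' := fun a b => Matrix.add_mul a b X
      map_smul' := fun c a => Matrix.smul_mul c a X }
  let L2 : Matrix (Fin e) (Fin e) ℝ →ₗ[ℝ] Matrix (Fin d) (Fin e) ℝ :=
    { toFun := fun Y => X * Y
      map_add' := fun a b => Matrix.mul_add X a b
      map_smul' := fun c a => Matrix.mul_smul X c a }
  have hc1 : Continuous L1 := LinearMap.continuous_of_finiteDimensional L1
  have hc2 : Continuous L2 := LinearMap.continuous_of_finiteDimensional L2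
  have h1 : exp M * X = ∑' j : ℕ, (j ! : ℝ)⁻¹ • (M ^ j * X) := by
    rw [exp_eq_tsum ℝ]
    have := (hsM.hasSum.map L1.toAddMonoidHom hc1).tsum_eq
    simp only [LinearMap.toAddMonoidHom_coe, Function.comp] at this
    calc (∑' j : ℕ, (j ! : ℝ)⁻¹ • M ^ j) * X
        = L1 (∑' j : ℕ, (j ! : ℝ)⁻¹ • M ^ j) := rfl
      _ = ∑' j : ℕ, L1 ((j ! : ℝ)⁻¹ • M ^ j) := this.symm
      _ = ∑' j : ℕ, (j ! : ℝ)⁻¹ • (M ^ j * X) := by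
          congr 1
          funext j
          show ((j ! : ℝ)⁻¹ • M ^ j) * X = _
          rw [Matrix.smul_mul]
  have h2 : X * exp N = ∑' j : ℕ, (j ! : ℝ)⁻¹ • (X * N ^ j) := by
    rw [exp_eq_tsum ℝ]
    have := (hsN.hasSum.map L2.toAddMonoidHom hc2).tsum_eq
    simp only [LinearMap.toAddMonoidHom_coe, Function.comp] at this
    calc X * (∑' j : ℕ, (j ! : ℝ)⁻¹ • N ^ j)
        = L2 (∑' j : ℕ, (j ! : ℝ)⁻¹ • N ^ j) := rfl
      _ = ∑' j : ℕ, L2 ((j ! : ℝ)⁻¹ • N ^ j) := this.symm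
      _ = ∑' j : ℕ, (j ! : ℝ)⁻¹ • (X * N ^ j) := by
          congr 1
          funext j
          show X * ((j ! : ℝ)⁻¹ • N ^ j) = _
          rw [Matrix.mul_smul]
  rw [h1, h2]
  congr 1
  funext j
  rw [pow_mul_eq_mul_pow h j]

lemma exp_mulVec_of_kernel {d : ℕ} (M : Matrix (Fin d) (Fin d) ℝ) (v : Fin d → ℝ)
    (h : M *ᵥ v = 0) : exp M *ᵥ v = v := by
  letI : SeminormedRing (Matrix (Fin d) (Fin d) ℝ) := Matrix.linftyOpSemiNormedRing
  letI : NormedRing (Matrix (Fin d) (Fin d) ℝ) := Matrix.linftyOpNormedRing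
  letI : NormedAlgebra ℝ (Matrix (Fin d) (Fin d) ℝ) := Matrix.linftyOpNormedAlgebra
  have hsM : Summable (fun j : ℕ => (j ! : ℝ)⁻¹ • M ^ j) := expSeries_summable' M
  let L : Matrix (Fin d) (Fin d) ℝ →ₗ[ℝ] (Fin d → ℝ) :=
    { toFun := fun Y => Y *ᵥ v
      map_add' := fun a b => Matrix.add_mulVec a b v
      map_smul' := fun c a => Matrix.smul_mulVec c a v }
  have hc : Continuous L := LinearMap.continuous_of_finiteDimensional L
  have hpow : ∀ j : ℕ, j ≠ 0 → M ^ j *ᵥ v = 0 := by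
    intro j hj
    obtain ⟨i, rfl⟩ := Nat.exists_eq_succ_of_ne_zero hj
    rw [pow_succ, ← Matrix.mulVec_mulVec, h, Matrix.mulVec_zero]
  have h1 : exp M *ᵥ v = ∑' j : ℕ, (j ! : ℝ)⁻¹ • (M ^ j *ᵥ v) := by
    rw [exp_eq_tsum ℝ]
    have := (hsM.hasSum.map L.toAddMonoidHom hc).tsum_eq
    simp only [LinearMap.toAddMonoidHom_coe, Function.comp] at this
    calc (∑' j : ℕ, (j ! : ℝ)⁻¹ • M ^ j) *ᵥ v
        = L (∑' j : ℕ, (j ! : ℝ)⁻¹ • M ^ j) := rfl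
      _ = ∑' j : ℕ, L ((j ! : ℝ)⁻¹ • M ^ j) := this.symm
      _ = ∑' j : ℕ, (j ! : ℝ)⁻¹ • (M ^ j *ᵥ v) := by
          congr 1
          funext j
          show ((j ! : ℝ)⁻¹ • M ^ j) *ᵥ v = _
          rw [Matrix.smul_mulVec]
  rw [h1, tsum_eq_single 0]
  · simp
  · intro j hj
    rw [hpow j hj, smul_zero]

end tsum

section spectral

lemma spectral_package {d : ℕ} {M : Matrix (Fin d) (Fin d) ℝ} (hM : M.IsHermitian)
    (hneg : ∀ i, hM.eigenvalues i < 0) {t γ : ℝ} (ht : 0 < t) (hγ : 0 < γ)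
    (q : Polynomial ℝ) (p : ℕ) :
    ∃ (U : Matrix (Fin d) (Fin d) ℝ) (lam : Fin d → ℝ),
      Uᵀ * U = 1 ∧ U * Uᵀ = 1 ∧ (∀ i, lam i < 0) ∧ IsUnit M.det ∧
      exp (t • M) * M⁻¹ = M⁻¹ * exp (t • M) ∧
      M⁻¹ * (exp (t • M) - 1) =
        U * diagonal (fun i => (Real.exp (t * lam i) - 1) / lam i) * Uᵀ ∧
      Polynomial.aeval (t • M) q * ((γ • (1 : Matrix (Fin d) (Fin d) ℝ) - t • M)⁻¹) ^ p =
        U * diagonal (fun i => q.eval (t * lam i) / (γ - t * lam i) ^ p) * Uᵀ := by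
  set U : Matrix (Fin d) (Fin d) ℝ := (hM.eigenvectorUnitary : Matrix (Fin d) (Fin d) ℝ)
    with hUdef
  set lam : Fin d → ℝ := hM.eigenvalues with hlamdef
  have hUl : Uᵀ * U = 1 := by
    have h := Matrix.mem_unitaryGroup_iff'.mp (hM.eigenvectorUnitary).2
    rwa [Matrix.star_eq_conjTranspose, Matrix.conjTranspose_eq_transpose_of_trivial] at h
  have hUr : U * Uᵀ = 1 := by
    have h := Matrix.mem_unitaryGroup_iff.mp (hM.eigenvectorUnitary).2
    rwa [Matrix.star_eq_conjTranspose, Matrix.conjTranspose_eq_transpose_of_trivial] at h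
  have hspec : M = U * diagonal lam * Uᵀ := by
    have h := hM.spectral_theorem
    rwa [Unitary.conjStarAlgAut_apply, Matrix.star_eq_conjTranspose, Matrix.conjTranspose_eq_transpose_of_trivial,
      RCLike.ofReal_real_eq_id, Function.id_comp] at h
  have hlam0 : ∀ i, lam i ≠ 0 := fun i => (hneg i).ne
  have hdet : IsUnit M.det := by
    rw [hM.det_eq_prod_eigenvalues, isUnit_iff_ne_zero]
    exact Finset.prod_ne_zero_iff.mpr fun i _ => hlam0 i
  have hsmulM : t • M = U * diagonal (fun i => t * lam i) * Uᵀ := by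
    rw [hspec, conj_smul, ← diagonal_smul]
    congr 2
  have hexp : exp (t • M) = U * diagonal (fun i => Real.exp (t * lam i)) * Uᵀ := by
    rw [hsmulM, conj_exp hUl hUr, Matrix.exp_diagonal]
    exact congrArg (fun D => U * D * Uᵀ) (congrArg diagonal (funext fun i => by
      simp [Real.exp_eq_exp_ℝ]))
  have hMinv : M⁻¹ = U * diagonal (fun i => (lam i)⁻¹) * Uᵀ := by
    rw [hspec]
    exact conj_inv hUl hUr hlam0
  have hcomm : exp (t • M) * M⁻¹ = M⁻¹ * exp (t • M) := by
    rw [hexp, hMinv, conj_mul hUl, conj_mul hUl, diagonal_mul_diagonal, diagonal_mul_diagonal]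
    exact congrArg (fun D => U * D * Uᵀ) (congrArg diagonal (funext fun i =>
      mul_comm _ _))
  have hone : (1 : Matrix (Fin d) (Fin d) ℝ) = U * 1 * Uᵀ := (conj_one hUr).symm
  have hB2 : M⁻¹ * (exp (t • M) - 1) =
      U * diagonal (fun i => (Real.exp (t * lam i) - 1) / lam i) * Uᵀ := by
    rw [hMinv, hexp, hone, conj_sub, conj_mul hUl, ← diagonal_one, diagonal_sub,
      diagonal_mul_diagonal]
    exact congrArg (fun D => U * D * Uᵀ) (congrArg diagonal (funext fun i => by
      simp [div_eq_inv_mul]))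
  have hd : diagonal (fun _ : Fin d => γ) = γ • (1 : Matrix (Fin d) (Fin d) ℝ) := by
    ext i j
    rcases eq_or_ne i j with rfl | h
    · simp
    · simp [Matrix.diagonal_apply_ne _ h, Matrix.one_apply_ne h]
  have hγ1 : U * diagonal (fun _ : Fin d => γ) * Uᵀ = γ • (1 : Matrix (Fin d) (Fin d) ℝ) := by
    rw [hd, ← conj_smul, conj_one hUr]
  have hgamne : ∀ i, γ - t * lam i ≠ 0 := by
    intro i
    have : t * lam i < 0 := mul_neg_of_pos_of_neg ht (hneg i)
    nlinarith
  have hgam : γ • (1 : Matrix (Fin d) (Fin d) ℝ) - t • M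
      = U * diagonal (fun i => γ - t * lam i) * Uᵀ := by
    rw [hsmulM, ← hγ1, conj_sub, diagonal_sub]
  have hgaminv : (γ • (1 : Matrix (Fin d) (Fin d) ℝ) - t • M)⁻¹
      = U * diagonal (fun i => (γ - t * lam i)⁻¹) * Uᵀ := by
    rw [hgam]
    exact conj_inv hUl hUr hgamne
  have hpowinv : ((γ • (1 : Matrix (Fin d) (Fin d) ℝ) - t • M)⁻¹) ^ p
      = U * diagonal (fun i => ((γ - t * lam i)⁻¹) ^ p) * Uᵀ := by
    rw [hgaminv, conj_pow hUl hUr, diagonal_pow]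
    congr 2
  have haeval : Polynomial.aeval (t • M) q = U * diagonal (fun i => q.eval (t * lam i)) * Uᵀ := by
    rw [hsmulM]
    exact conj_aeval hUl hUr _ q
  have hB3 : Polynomial.aeval (t • M) q * ((γ • (1 : Matrix (Fin d) (Fin d) ℝ) - t • M)⁻¹) ^ p =
      U * diagonal (fun i => q.eval (t * lam i) / (γ - t * lam i) ^ p) * Uᵀ := by
    rw [haeval, hpowinv, conj_mul hUl, diagonal_mul_diagonal]
    exact congrArg (fun D => U * D * Uᵀ) (congrArg diagonal (funext fun i => by
      show Polynomial.eval (t * lam i) q * ((γ - t * lam i)⁻¹) ^ p = _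
      rw [div_eq_mul_inv, inv_pow]))
  exact ⟨U, lam, hUl, hUr, fun i => hneg i, hdet, hcomm, hB2, hB3⟩

end spectral

lemma entry_bound {p : ℕ} {t γ C : ℝ} (ht : 0 < t) (pol : Polynomial ℝ)
    (hbound : ∀ z : ℝ, z < 0 → |(Real.exp z - 1) / z - pol.eval z / (γ - z) ^ p| ≤ C)
    {lam : ℝ} (hlam : lam < 0) :
    |(Real.exp (t * lam) - 1) / lam -
      (Polynomial.C t * pol).eval (t * lam) / (γ - t * lam) ^ p| ≤ t * C := by
  have hz : t * lam < 0 := mul_neg_of_pos_of_neg ht hlam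
  have h1 : (Real.exp (t * lam) - 1) / lam = t * ((Real.exp (t * lam) - 1) / (t * lam)) := by
    rw [mul_div_assoc']
    rw [mul_div_mul_left _ _ (ne_of_gt ht)]
  rw [h1, Polynomial.eval_mul, Polynomial.eval_C, mul_div_assoc, ← mul_sub, abs_mul,
    abs_of_pos ht]
  exact mul_le_mul_of_nonneg_left (hbound _ hz) ht.le

end KrylovAux

open KrylovAux in
/-- **Theorem 2 (error bound).** -/
theorem krylov_error_bound (n k p : ℕ) (hn : 0 < n) (hk : 0 < k)
    (A : Matrix (Fin n) (Fin n) ℝ) (R : Matrix (Fin k) (Fin n) ℝ)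
    (hR : R * Rᵀ = 1) (hPA : (Rᵀ * R) * A = A)
    (hAs : (R * A * Rᵀ).IsHermitian) (hAseig : ∀ i, hAs.eigenvalues i < 0)
    (b : Fin n → ℝ) (hb : b ≠ 0) (hRb : R.mulVec b = 0)
    (hbs : R.mulVec (A.mulVec b) ≠ 0)
    (W : Matrix (Fin k) (Fin (p + 1)) ℝ) (hW : Wᵀ * W = 1)
    (hWcol : ∀ i, W i 0 = R.mulVec (A.mulVec b) i / euclNorm (R.mulVec (A.mulVec b)))
    (hSt : (Wᵀ * (R * A * Rᵀ) * W).IsHermitian)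
    (hSteig : ∀ i, hSt.eigenvalues i < 0)
    (t : ℝ) (ht : 0 < t) (γ : ℝ) (hγ : 0 < γ)
    (hexact : ∀ q : Polynomial ℝ, q.natDegree ≤ p →
      (Polynomial.aeval (t • (R * A * Rᵀ)) q *
          ((γ • (1 : Matrix (Fin k) (Fin k) ℝ) - t • (R * A * Rᵀ))⁻¹) ^ p).mulVec
        (R.mulVec (A.mulVec b)) =
      euclNorm (R.mulVec (A.mulVec b)) •
        W.mulVec
          ((Polynomial.aeval (t • (Wᵀ * (R * A * Rᵀ) * W)) q *
              ((γ • (1 : Matrix (Fin (p + 1)) (Fin (p + 1)) ℝ) -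
                  t • (Wᵀ * (R * A * Rᵀ) * W))⁻¹) ^ p).mulVec
            (Pi.single (0 : Fin (p + 1)) 1))) :
    ∀ pol : Polynomial ℝ, pol.natDegree ≤ p →
      ∀ C : ℝ, 0 ≤ C →
        (∀ z : ℝ, z < 0 →
          |(Real.exp z - 1) / z - pol.eval z / (γ - z) ^ p| ≤ C) →
        euclNorm
            ((NormedSpace.exp (t • A)).mulVec b -
              (b + Rᵀ.mulVec
                (euclNorm (R.mulVec (A.mulVec b)) •
                  W.mulVec
                    (((Wᵀ * (R * A * Rᵀ) * W)⁻¹ *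
                        (NormedSpace.exp (t • (Wᵀ * (R * A * Rᵀ) * W)) - 1)).mulVec
                      (Pi.single (0 : Fin (p + 1)) 1))))) ≤
          2 * t * C * euclNorm (R.mulVec (A.mulVec b)) := by
  intro pol hpol C hC hbound
  classical
  set q : Polynomial ℝ := Polynomial.C t * pol with hqdef
  have hqdeg : q.natDegree ≤ p := le_trans (Polynomial.natDegree_C_mul_le t pol) hpol
  set As : Matrix (Fin k) (Fin k) ℝ := R * A * Rᵀ with hAsdef
  set St : Matrix (Fin (p + 1)) (Fin (p + 1)) ℝ := Wᵀ * As * W with hStdef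
  set bs : Fin k → ℝ := R *ᵥ (A *ᵥ b) with hbsdef
  set e1 : Fin (p + 1) → ℝ := Pi.single (0 : Fin (p + 1)) 1 with he1def
  obtain ⟨U, lam, hUl, hUr, hlneg, hdetAs, hcommA, hB2A, hB3A⟩ :=
    spectral_package hAs hAseig ht hγ q p
  obtain ⟨V, mu, hVl, hVr, hmneg, hdetSt, hcommS, hB2S, hB3S⟩ :=
    spectral_package hSt hSteig ht hγ q p
  have htC : (0 : ℝ) ≤ t * C := mul_nonneg ht.le hC
  have he1norm : euclNorm e1 = 1 := by
    rw [he1def]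
    unfold euclNorm
    have hsum : ∑ i, (Pi.single (0 : Fin (p + 1)) 1 : Fin (p + 1) → ℝ) i ^ 2 = 1 := by
      rw [Finset.sum_eq_single (0 : Fin (p + 1))]
      · simp
      · intro j _ hj
        simp [Pi.single_eq_of_ne hj]
      · simp
    rw [hsum, Real.sqrt_one]
  -- Step A : representation of exp(tA) b
  have hAb : A *ᵥ b = Rᵀ *ᵥ bs := by
    conv_lhs => rw [← hPA]
    rw [Matrix.mul_assoc, ← Matrix.mulVec_mulVec, ← Matrix.mulVec_mulVec]
  have hARt : A * Rᵀ = Rᵀ * As := by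
    conv_lhs => rw [← hPA]
    rw [hAsdef]
    simp only [Matrix.mul_assoc]
  have hAsinv : As * As⁻¹ = 1 := Matrix.mul_nonsing_inv _ hdetAs
  have hintert : NormedSpace.exp (t • A) * Rᵀ = Rᵀ * NormedSpace.exp (t • As) := by
    apply exp_intertwine
    rw [Matrix.smul_mul, Matrix.mul_smul, hARt]
  set u : Fin k → ℝ := As⁻¹ *ᵥ bs with hudef
  set v0 : Fin n → ℝ := b - Rᵀ *ᵥ u with hv0def
  have hb' : b = v0 + Rᵀ *ᵥ u := by rw [hv0def]; abel
  have hAv0 : A *ᵥ v0 = 0 := by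
    have h2 : A *ᵥ (Rᵀ *ᵥ u) = Rᵀ *ᵥ bs := by
      conv_lhs => rw [Matrix.mulVec_mulVec, hARt, ← Matrix.mulVec_mulVec, hudef,
        Matrix.mulVec_mulVec _ As As⁻¹, hAsinv, Matrix.one_mulVec]
    rw [hv0def, Matrix.mulVec_sub, hAb, h2, sub_self]
  have hexpb : NormedSpace.exp (t • A) *ᵥ b
      = v0 + Rᵀ *ᵥ (NormedSpace.exp (t • As) *ᵥ u) := by
    conv_lhs => rw [hb']
    rw [Matrix.mulVec_add]
    congr 1
    · apply exp_mulVec_of_kernel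
      rw [Matrix.smul_mulVec, hAv0, smul_zero]
    · rw [Matrix.mulVec_mulVec, hintert, ← Matrix.mulVec_mulVec]
  set x : Fin k → ℝ := (As⁻¹ * (NormedSpace.exp (t • As) - 1)) *ᵥ bs with hxdef
  set y : Fin (p + 1) → ℝ := (St⁻¹ * (NormedSpace.exp (t • St) - 1)) *ᵥ e1 with hydef
  have hxu : NormedSpace.exp (t • As) *ᵥ u - u = x := by
    rw [hudef, Matrix.mulVec_mulVec, hcommA, hxdef, Matrix.mul_sub, Matrix.mul_one,
      Matrix.sub_mulVec]
  have key : NormedSpace.exp (t • A) *ᵥ b - (b + Rᵀ *ᵥ (euclNorm bs • (W *ᵥ y)))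
      = Rᵀ *ᵥ (x - euclNorm bs • (W *ᵥ y)) := by
    rw [hexpb]
    conv_lhs => rw [hb']
    rw [← hxu, Matrix.mulVec_sub, Matrix.mulVec_sub]
    abel
  have hexact' := hexact q hqdeg
  set m2 : Fin (p + 1) → ℝ :=
    (Polynomial.aeval (t • St) q *
      ((γ • (1 : Matrix (Fin (p + 1)) (Fin (p + 1)) ℝ) - t • St)⁻¹) ^ p) *ᵥ e1 with hm2def
  set L1 : Fin k → ℝ :=
    (Polynomial.aeval (t • As) q *
      ((γ • (1 : Matrix (Fin k) (Fin k) ℝ) - t • As)⁻¹) ^ p) *ᵥ bs with hL1def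
  have hbound1 : euclNorm (x - L1) ≤ t * C * euclNorm bs := by
    rw [hxdef, hL1def, ← Matrix.sub_mulVec, hB2A, hB3A, conj_sub, diagonal_sub]
    refine enorm_conj_mulVec_le hUl hUr _ htC (fun i => ?_) bs
    rw [hqdef]
    exact entry_bound ht pol hbound (hlneg i)
  have hbound2 : euclNorm (m2 - y) ≤ t * C := by
    rw [hm2def, hydef, ← Matrix.sub_mulVec, hB3S, hB2S, conj_sub, diagonal_sub]
    calc euclNorm _ ≤ (t * C) * euclNorm e1 := by
          refine enorm_conj_mulVec_le hVl hVr _ htC (fun i => ?_) e1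
          rw [hqdef, abs_sub_comm]
          exact entry_bound ht pol hbound (hmneg i)
      _ = t * C := by rw [he1norm, mul_one]
  have tri : x - euclNorm bs • (W *ᵥ y) = (x - L1) + euclNorm bs • (W *ᵥ (m2 - y)) := by
    rw [Matrix.mulVec_sub, smul_sub, hexact']
    abel
  have hb2' : euclNorm (euclNorm bs • (W *ᵥ (m2 - y))) ≤ euclNorm bs * (t * C) := by
    rw [KrylovAux.enorm_smul (enorm_nonneg bs), enorm_mulVec_orth W hW]
    exact mul_le_mul_of_nonneg_left hbound2 (enorm_nonneg bs)
  calc euclNorm (NormedSpace.exp (t • A) *ᵥ b - (b + Rᵀ *ᵥ (euclNorm bs • (W *ᵥ y))))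
      = euclNorm (x - euclNorm bs • (W *ᵥ y)) := by
        rw [key, enorm_mulVec_orth Rᵀ (by rw [transpose_transpose]; exact hR)]
    _ = euclNorm ((x - L1) + euclNorm bs • (W *ᵥ (m2 - y))) := by rw [tri]
    _ ≤ euclNorm (x - L1) + euclNorm (euclNorm bs • (W *ᵥ (m2 - y))) := enorm_add_le _ _
    _ ≤ t * C * euclNorm bs + euclNorm bs * (t * C) := add_le_add hbound1 hb2'
    _ = 2 * t * C * euclNorm bs := by ring
end
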